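/- arXiv:2001.07085 — 7 statements merged into one kernel-verified Lean document; each statement's English description precedes it below -/
import Mathlib

section
/- Let ε > 0, let I ⊆ ℝ be an interval, and let l, m : I → ℂ be differentiable functions satisfying the Riccati equation l'(t) + i·l(t)² = i·ε²·t² and the amplitude equation i·m'(t) = (1/2)·m(t)·l(t) for all t ∈ I. Then the function v(t,x) = m(t)·exp(−l(t)·x²/2) satisfies the Schrödinger equation i·∂_t v(t,x) = −(1/2)·∂²_x v(t,x) + (ε²·t²·x²/2)·v(t,x) for all t ∈ I and x ∈ ℝ. -/
open Complex MeasureTheory Set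

lemma gaussian_hasDerivAt (C a : ℂ) (x : ℝ) :
    HasDerivAt (fun y : ℝ => C * Complex.exp (a * (y : ℂ) ^ 2 / 2))
      (C * Complex.exp (a * (x : ℂ) ^ 2 / 2) * (a * (x : ℂ))) x := by
  have h1 : HasDerivAt (fun z : ℂ => C * Complex.exp (a * z ^ 2 / 2))
      (C * Complex.exp (a * (x : ℂ) ^ 2 / 2) * (a * (x : ℂ))) (x : ℂ) := by
    have hz : HasDerivAt (fun z : ℂ => a * z ^ 2 / 2) (a * (x : ℂ)) (x : ℂ) := by
      have := ((hasDerivAt_pow 2 (x : ℂ)).const_mul a).div_const 2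
      simpa [mul_comm, mul_assoc, mul_div_assoc] using this
    simpa [mul_assoc] using (hz.cexp.const_mul C)
  exact h1.comp_ofReal

lemma gaussian_deriv (C a : ℂ) :
    deriv (fun y : ℝ => C * Complex.exp (a * (y : ℂ) ^ 2 / 2)) =
      fun x : ℝ => C * Complex.exp (a * (x : ℂ) ^ 2 / 2) * (a * (x : ℂ)) := by
  funext x
  exact (gaussian_hasDerivAt C a x).deriv

lemma gaussian_deriv2 (C a : ℂ) (x : ℝ) :
    deriv (deriv (fun y : ℝ => C * Complex.exp (a * (y : ℂ) ^ 2 / 2))) x =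
      C * Complex.exp (a * (x : ℂ) ^ 2 / 2) * (a ^ 2 * (x : ℂ) ^ 2 + a) := by
  rw [gaussian_deriv]
  have h1 := gaussian_hasDerivAt C a x
  have h2 : HasDerivAt (fun y : ℝ => a * (y : ℂ)) a x := by
    simpa using (Complex.ofRealCLM.hasDerivAt (x := x)).const_mul a
  have := h1.mul h2
  rw [show (fun x : ℝ => C * Complex.exp (a * (x : ℂ) ^ 2 / 2) * (a * (x : ℂ))) =
      ((fun y : ℝ => C * Complex.exp (a * (y : ℂ) ^ 2 / 2)) * fun y : ℝ => a * (y : ℂ)) from rfl, this.deriv]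
  ring

/-- If `l` solves the Riccati equation `l' + i l² = i ε² t²` and `m` solves the amplitude
equation `i m' = (1/2) m l` on an interval `I`, then `v(t,x) = m(t)·exp(-l(t)x²/2)` solves
the Schrödinger equation `i ∂_t v = -(1/2) ∂²_x v + (ε²t²x²/2) v` on `I × ℝ`. -/
theorem solvable_gaussian_solution
    (ε : ℝ) (hε : 0 < ε) (I : Set ℝ) (hI : I.OrdConnected)
    (l m : ℝ → ℂ)
    (hl : ∀ t ∈ I, HasDerivWithinAt l
      (Complex.I * (ε : ℂ) ^ 2 * (t : ℂ) ^ 2 - Complex.I * (l t) ^ 2) I t)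
    (hm : ∀ t ∈ I, HasDerivWithinAt m (m t * l t / (2 * Complex.I)) I t) :
    ∀ t ∈ I, ∀ x : ℝ, ∃ dv : ℂ,
      HasDerivWithinAt (fun τ : ℝ => m τ * Complex.exp (-(l τ) * (x : ℂ) ^ 2 / 2)) dv I t ∧
      Complex.I * dv =
        -(1 / 2 : ℂ) * deriv (deriv (fun y : ℝ => m t * Complex.exp (-(l t) * (y : ℂ) ^ 2 / 2))) x
          + ((ε : ℂ) ^ 2 * (t : ℂ) ^ 2 * (x : ℂ) ^ 2 / 2)
            * (m t * Complex.exp (-(l t) * (x : ℂ) ^ 2 / 2)) := by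
  intro t ht x
  set E : ℂ := Complex.exp (-(l t) * (x : ℂ) ^ 2 / 2) with hE
  have hlarg : HasDerivWithinAt (fun τ : ℝ => -(l τ) * (x : ℂ) ^ 2 / 2)
      (-(Complex.I * (ε : ℂ) ^ 2 * (t : ℂ) ^ 2 - Complex.I * (l t) ^ 2) * (x : ℂ) ^ 2 / 2) I t := by
    exact (((hl t ht).neg).mul_const ((x : ℂ) ^ 2)).div_const 2
  have hexp : HasDerivWithinAt (fun τ : ℝ => Complex.exp (-(l τ) * (x : ℂ) ^ 2 / 2))
      (E * (-(Complex.I * (ε : ℂ) ^ 2 * (t : ℂ) ^ 2 - Complex.I * (l t) ^ 2) * (x : ℂ) ^ 2 / 2)) I t := by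
    simpa [hE, mul_comm] using hlarg.cexp
  have hv := (hm t ht).mul hexp
  refine ⟨_, hv, ?_⟩
  rw [show (fun y : ℝ => m t * Complex.exp (-(l t) * (y : ℂ) ^ 2 / 2)) =
      (fun y : ℝ => m t * Complex.exp ((-(l t)) * (y : ℂ) ^ 2 / 2)) from rfl,
    gaussian_deriv2 (m t) (-(l t)) x]
  rw [show Complex.exp (-l t * (x:ℂ)^2/2) = E from rfl]
  have hI2 : (Complex.I : ℂ) * Complex.I = -1 := Complex.I_mul_I
  field_simp
  ring_nf
  rw [Complex.I_sq]
  ring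
end

section
/- Let ε > 0, let I ⊆ ℝ be an interval containing a point t₀, and let l, m : I → ℂ be differentiable functions satisfying l'(t) + i·l(t)² = i·ε²·t² and i·m'(t) = (1/2)·m(t)·l(t) for all t ∈ I, together with the initial conditions l(t₀) = 1 and m(t₀) = π^{−1/4}. Then |m(t)|⁴ = π^{−1}·Re l(t) for all t ∈ I. -/
open Complex MeasureTheory Set

lemma ode_unique_aux (I : Set ℝ) (hI : I.OrdConnected) (t₀ : ℝ) (ht₀ : t₀ ∈ I)
    (c f g : ℝ → ℝ) (hc : ContinuousOn c I)
    (hf : ∀ t ∈ I, HasDerivWithinAt f (c t * f t) I t)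
    (hg : ∀ t ∈ I, HasDerivWithinAt g (c t * g t) I t)
    (h0 : f t₀ = g t₀) : ∀ t ∈ I, f t = g t := by
  intro t ht
  rcases le_total t₀ t with hle | hle
  · set J := Icc t₀ t with hJdef
    have hJ : J ⊆ I := hI.out ht₀ ht
    obtain ⟨C, hC⟩ := isCompact_Icc.exists_bound_of_continuousOn (hc.mono hJ)
    set v : ℝ → ℝ → ℝ := fun s x => (if s ∈ J then c s else 0) * x with hvdef
    have hv : ∀ s, LipschitzOnWith (Real.toNNReal C) (v s) univ := by
      intro s
      apply LipschitzWith.lipschitzOnWith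
      apply LipschitzWith.of_dist_le_mul
      intro x y
      have hb : |if s ∈ J then c s else 0| ≤ max C 0 := by
        split
        · exact le_max_of_le_left (by simpa using hC _ ‹_›)
        · simp
      simp only [hvdef, Real.dist_eq, ← mul_sub, abs_mul]
      calc |if s ∈ J then c s else 0| * |x - y| ≤ max C 0 * |x - y| :=
            mul_le_mul_of_nonneg_right hb (abs_nonneg _)
        _ = (Real.toNNReal C : ℝ) * |x - y| := by rw [Real.coe_toNNReal']
    have hder : ∀ (F : ℝ → ℝ), (∀ u ∈ I, HasDerivWithinAt F (c u * F u) I u) →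
        ∀ s ∈ Ico t₀ t, HasDerivWithinAt F (v s (F s)) (Ici s) s := by
      intro F hF s hs
      have hsJ : s ∈ J := Ico_subset_Icc_self hs
      have h1 : HasDerivWithinAt F (c s * F s) J s := (hF s (hJ hsJ)).mono hJ
      have h2 := h1.mono_of_mem_nhdsWithin (Icc_mem_nhdsGE_of_mem hs)
      simpa [hvdef, if_pos hsJ] using h2
    have := ODE_solution_unique_of_mem_Icc_right (fun s _ => hv s)
      (fun s hs => ((hf s (hJ hs)).continuousWithinAt).mono hJ)
      (hder f hf) (fun _ _ => mem_univ _)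
      (fun s hs => ((hg s (hJ hs)).continuousWithinAt).mono hJ)
      (hder g hg) (fun _ _ => mem_univ _) h0
    exact this ⟨hle, le_refl t⟩
  · set J := Icc t t₀ with hJdef
    have hJ : J ⊆ I := hI.out ht ht₀
    obtain ⟨C, hC⟩ := isCompact_Icc.exists_bound_of_continuousOn (hc.mono hJ)
    set v : ℝ → ℝ → ℝ := fun s x => (if s ∈ J then c s else 0) * x with hvdef
    have hv : ∀ s, LipschitzOnWith (Real.toNNReal C) (v s) univ := by
      intro s
      apply LipschitzWith.lipschitzOnWith
      apply LipschitzWith.of_dist_le_mul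
      intro x y
      have hb : |if s ∈ J then c s else 0| ≤ max C 0 := by
        split
        · exact le_max_of_le_left (by simpa using hC _ ‹_›)
        · simp
      simp only [hvdef, Real.dist_eq, ← mul_sub, abs_mul]
      calc |if s ∈ J then c s else 0| * |x - y| ≤ max C 0 * |x - y| :=
            mul_le_mul_of_nonneg_right hb (abs_nonneg _)
        _ = (Real.toNNReal C : ℝ) * |x - y| := by rw [Real.coe_toNNReal']
    have hder : ∀ (F : ℝ → ℝ), (∀ u ∈ I, HasDerivWithinAt F (c u * F u) I u) →
        ∀ s ∈ Ioc t t₀, HasDerivWithinAt F (v s (F s)) (Iic s) s := by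
      intro F hF s hs
      have hsJ : s ∈ J := Ioc_subset_Icc_self hs
      have h1 : HasDerivWithinAt F (c s * F s) J s := (hF s (hJ hsJ)).mono hJ
      have h2 := h1.mono_of_mem_nhdsWithin (Icc_mem_nhdsLE_of_mem hs)
      simpa [hvdef, if_pos hsJ] using h2
    have := ODE_solution_unique_of_mem_Icc_left (fun s _ => hv s)
      (fun s hs => ((hf s (hJ hs)).continuousWithinAt).mono hJ)
      (hder f hf) (fun _ _ => mem_univ _)
      (fun s hs => ((hg s (hJ hs)).continuousWithinAt).mono hJ)
      (hder g hg) (fun _ _ => mem_univ _) h0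
    exact this ⟨le_refl t, hle⟩


/-- If `l` solves the Riccati equation `l' + i l² = i ε² t²` with `l(t₀) = 1` and `m` solves
`i m' = (1/2) m l` with `m(t₀) = π^{-1/4}` on an interval `I ∋ t₀`, then
`|m(t)|⁴ = π⁻¹ Re l(t)` on `I`. -/
theorem abs_m_pow_four_eq_re_l
    (ε : ℝ) (hε : 0 < ε) (I : Set ℝ) (hI : I.OrdConnected)
    (t₀ : ℝ) (ht₀ : t₀ ∈ I) (l m : ℝ → ℂ)
    (hl : ∀ t ∈ I, HasDerivWithinAt l
      (Complex.I * (ε : ℂ) ^ 2 * (t : ℂ) ^ 2 - Complex.I * (l t) ^ 2) I t)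
    (hm : ∀ t ∈ I, HasDerivWithinAt m (m t * l t / (2 * Complex.I)) I t)
    (hl0 : l t₀ = 1)
    (hm0 : m t₀ = ((Real.pi ^ (-(1 / 4) : ℝ) : ℝ) : ℂ)) :
    ∀ t ∈ I, ‖m t‖ ^ 4 = Real.pi⁻¹ * (l t).re := by
  have hc : ContinuousOn (fun s => 2 * (l s).im) I := by
    have : ContinuousOn l I := fun s hs => (hl s hs).continuousWithinAt
    exact continuousOn_const.mul (Complex.continuous_im.comp_continuousOn this)
  -- derivative of |m|⁴ = (normSq m)²
  have hf : ∀ t ∈ I, HasDerivWithinAt (fun s => Complex.normSq (m s) ^ 2)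
      (2 * (l t).im * Complex.normSq (m t) ^ 2) I t := by
    intro t ht
    have hp : HasDerivWithinAt (fun s => m s * (starRingEnd ℂ) (m s))
        ((m t * l t / (2 * Complex.I)) * (starRingEnd ℂ) (m t)
          + m t * (starRingEnd ℂ) (m t * l t / (2 * Complex.I))) I t :=
      (hm t ht).mul (hm t ht).star
    have hre := (Complex.reCLM.hasFDerivAt).comp_hasDerivWithinAt t hp
    have hre' : HasDerivWithinAt (fun s => Complex.normSq (m s))
        (Complex.normSq (m t) * (l t).im) I t := by
      have heq : (⇑Complex.reCLM ∘ fun s => m s * (starRingEnd ℂ) (m s))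
          = fun s => Complex.normSq (m s) := by
        funext s; simp [Function.comp, Complex.mul_conj]
      rw [heq] at hre
      refine hre.congr_deriv ?_
      simp only [Complex.reCLM_apply]
      simp [Complex.add_re, Complex.div_re, Complex.div_im, Complex.normSq_apply]
      ring
    have := hre'.pow 2
    refine this.congr_deriv ?_
    ring
  -- derivative of π⁻¹ Re l
  have hg : ∀ t ∈ I, HasDerivWithinAt (fun s => Real.pi⁻¹ * (l s).re)
      (2 * (l t).im * (Real.pi⁻¹ * (l t).re)) I t := by
    intro t ht
    have hre := (Complex.reCLM.hasFDerivAt).comp_hasDerivWithinAt t (hl t ht)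
    have := hre.const_mul Real.pi⁻¹
    refine this.congr_deriv ?_
    simp only [Complex.reCLM_apply]
    simp [pow_two]
    ring
  have h0 : Complex.normSq (m t₀) ^ 2 = Real.pi⁻¹ * (l t₀).re := by
    rw [hm0, hl0, Complex.normSq_ofReal]
    have : (Real.pi ^ (-(1/4):ℝ)) ^ (4:ℕ) = Real.pi⁻¹ := by
      rw [← Real.rpow_natCast (Real.pi ^ (-(1/4):ℝ)) 4, ← Real.rpow_mul Real.pi_pos.le]
      norm_num [Real.rpow_neg_one]
    simp only [Complex.one_re, mul_one]
    rw [← this]; ring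
  have key := ode_unique_aux I hI t₀ ht₀ (fun s => 2 * (l s).im) _ _ hc hf hg h0
  intro t ht
  have h4 : ‖m t‖ ^ 4 = Complex.normSq (m t) ^ 2 := by
    rw [← Complex.sq_norm]; ring
  rw [h4]
  exact key t ht
end

section
/- Let ε > 0 and κ ∈ ℂ with κ ∉ ℝ. Then the function t ↦ w̃_ε(t,κ) is entire (analytic on all of ℂ), and w̃_ε(t,κ) ≠ 0 for every t ∈ ℝ. -/
open Complex MeasureTheory Set

noncomputable section

/-- `M_ν(s) = ∑_{k=0}^∞ (-1)^k s^k/(k!·Γ(ν+k+1))`. -/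
def Mnu (ν : ℝ) (s : ℂ) : ℂ :=
  ∑' k : ℕ, (-1) ^ k * s ^ k / ((k.factorial : ℂ) * Complex.Gamma ((ν : ℂ) + (k : ℂ) + 1))

/-- `w̃_ε(t,κ) = -M_{-1/4}(ε²t⁴/16) + (κ ε^{1/2} t/2)·M_{1/4}(ε²t⁴/16)`. -/
def wtilde (ε : ℝ) (κ : ℂ) (t : ℂ) : ℂ :=
  -Mnu (-1/4) ((ε : ℂ) ^ 2 * t ^ 4 / 16)
    + κ * (Real.sqrt ε : ℂ) * t / 2 * Mnu (1/4) ((ε : ℂ) ^ 2 * t ^ 4 / 16)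

/-- `l_ε(t,κ) = -i·(∂_t w̃_ε(t,κ))/w̃_ε(t,κ)`. -/
def leps (ε : ℝ) (κ : ℂ) (t : ℂ) : ℂ :=
  -Complex.I * deriv (wtilde ε κ) t / wtilde ε κ t

/-- `J_ν(x) = (x/2)^ν·M_ν(x²/4)` (for `x > 0`). -/
def Jc (ν : ℝ) (x : ℝ) : ℂ :=
  (((x / 2) ^ ν : ℝ) : ℂ) * Mnu ν ((x : ℂ) ^ 2 / 4)

/-- `κ_ε = -(J_{-1/4}(1/(2ε)) + i·J_{3/4}(1/(2ε)))/(J_{1/4}(1/(2ε)) - i·J_{-3/4}(1/(2ε)))`. -/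
def kappaEps (ε : ℝ) : ℂ :=
  -(Jc (-1/4) (1 / (2 * ε)) + Complex.I * Jc (3/4) (1 / (2 * ε))) /
    (Jc (1/4) (1 / (2 * ε)) - Complex.I * Jc (-3/4) (1 / (2 * ε)))

/-- `μ_ε = π^{-1/2}·w̃_ε(-1/ε, κ_ε)/w̃_ε(1/ε, κ_ε)`. -/
def mue (ε : ℝ) : ℂ :=
  ((Real.pi ^ (-(1/2) : ℝ) : ℝ) : ℂ) * wtilde ε (kappaEps ε) (((-(1/ε)) : ℝ) : ℂ)
    / wtilde ε (kappaEps ε) (((1/ε : ℝ)) : ℂ)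

namespace WtildeAux

/-- Coefficients of the power series of `Mnu ν`. -/
def aC (ν : ℝ) (k : ℕ) : ℂ :=
  (-1) ^ k / ((k.factorial : ℂ) * Complex.Gamma ((ν : ℂ) + (k : ℂ) + 1))

lemma arg_ne {ν : ℝ} (hν : -1 < ν) (k : ℕ) : ((ν : ℂ) + (k : ℂ) + 1) ≠ 0 := by
  have h0 : (0 : ℝ) < ν + k + 1 := by
    have : (0 : ℝ) ≤ (k : ℝ) := Nat.cast_nonneg k
    linarith
  have he : ((ν : ℂ) + (k : ℂ) + 1) = ((ν + k + 1 : ℝ) : ℂ) := by push_cast; ring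
  rw [he]
  exact_mod_cast h0.ne'

lemma gamma_ne {ν : ℝ} (hν : -1 < ν) (k : ℕ) :
    Complex.Gamma ((ν : ℂ) + (k : ℂ) + 1) ≠ 0 := by
  have h0 : (0 : ℝ) < ν + k + 1 := by
    have : (0 : ℝ) ≤ (k : ℝ) := Nat.cast_nonneg k
    linarith
  have he : ((ν : ℂ) + (k : ℂ) + 1) = ((ν + k + 1 : ℝ) : ℂ) := by push_cast; ring
  rw [he, Complex.Gamma_ofReal]
  exact_mod_cast (Real.Gamma_pos_of_pos h0).ne'

lemma gamma1_ne {ν : ℝ} (hν : -1 < ν) : Complex.Gamma ((ν : ℂ) + 1) ≠ 0 := by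
  have := gamma_ne hν 0
  simpa using this

lemma aC_ne {ν : ℝ} (hν : -1 < ν) (k : ℕ) : aC ν k ≠ 0 := by
  refine div_ne_zero (pow_ne_zero _ (by norm_num)) (mul_ne_zero ?_ (gamma_ne hν k))
  exact_mod_cast k.factorial_ne_zero

lemma gamma_succ_arg {ν : ℝ} (hν : -1 < ν) (k : ℕ) :
    Complex.Gamma ((ν : ℂ) + ((k + 1 : ℕ) : ℂ) + 1)
      = ((ν : ℂ) + (k : ℂ) + 1) * Complex.Gamma ((ν : ℂ) + (k : ℂ) + 1) := by
  have h := Complex.Gamma_add_one ((ν : ℂ) + (k : ℂ) + 1) (arg_ne hν k)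
  rw [← h]
  congr 1
  push_cast
  ring

/-- key coefficient recurrence, giving termwise derivative relations. -/
lemma aC_succ {ν : ℝ} (hν : -1 < ν) (k : ℕ) :
    ((k : ℂ) + 1) * aC ν (k + 1) = -aC (ν + 1) k := by
  unfold aC
  have h1 : (((ν + 1 : ℝ) : ℂ)) + (k : ℂ) + 1 = (ν : ℂ) + ((k + 1 : ℕ) : ℂ) + 1 := by
    push_cast; ring
  rw [h1, gamma_succ_arg hν k]
  have h2 : (((k + 1).factorial : ℂ)) = ((k : ℂ) + 1) * (k.factorial : ℂ) := by
    push_cast [Nat.factorial_succ]; ring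
  rw [h2]
  have hk : ((k : ℂ) + 1) ≠ 0 := Nat.cast_add_one_ne_zero k
  have hf : ((k.factorial : ℕ) : ℂ) ≠ 0 := by exact_mod_cast k.factorial_ne_zero
  have hg := gamma_ne hν k
  have ha := arg_ne hν k
  field_simp
  ring

lemma aC_succ' {ν : ℝ} (hν : -1 < ν) (k : ℕ) :
    aC ν (k + 1) = -aC ν k / (((k : ℂ) + 1) * ((ν : ℂ) + (k : ℂ) + 1)) := by
  unfold aC
  rw [gamma_succ_arg hν k]
  have h2 : (((k + 1).factorial : ℂ)) = ((k : ℂ) + 1) * (k.factorial : ℂ) := by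
    push_cast [Nat.factorial_succ]; ring
  rw [h2]
  have hk : ((k : ℂ) + 1) ≠ 0 := Nat.cast_add_one_ne_zero k
  have hf : ((k.factorial : ℕ) : ℂ) ≠ 0 := by exact_mod_cast k.factorial_ne_zero
  have hg := gamma_ne hν k
  have ha := arg_ne hν k
  field_simp
  ring

lemma aC_rec {ν : ℝ} (hν : 0 < ν) (k : ℕ) :
    aC (ν - 1) k = ((ν : ℂ) + (k : ℂ)) * aC ν k := by
  unfold aC
  have ha : ((ν : ℂ) + (k : ℂ)) ≠ 0 := by
    have h0 : (0 : ℝ) < ν + k := by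
      have : (0 : ℝ) ≤ (k : ℝ) := Nat.cast_nonneg k
      linarith
    have he : ((ν : ℂ) + (k : ℂ)) = ((ν + k : ℝ) : ℂ) := by push_cast; ring
    rw [he]; exact_mod_cast h0.ne'
  have h1 : (((ν - 1 : ℝ) : ℂ)) + (k : ℂ) + 1 = (ν : ℂ) + (k : ℂ) := by push_cast; ring
  have h2 : Complex.Gamma ((ν : ℂ) + (k : ℂ) + 1)
      = ((ν : ℂ) + (k : ℂ)) * Complex.Gamma ((ν : ℂ) + (k : ℂ)) := by
    have h := Complex.Gamma_add_one ((ν : ℂ) + (k : ℂ)) ha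
    rw [← h]
  have hg : Complex.Gamma ((ν : ℂ) + (k : ℂ)) ≠ 0 := by
    have := gamma_ne (show (-1 : ℝ) < ν - 1 by linarith) k
    rwa [h1] at this
  have hf : ((k.factorial : ℕ) : ℂ) ≠ 0 := by exact_mod_cast k.factorial_ne_zero
  rw [h1, h2]
  field_simp

/-- The formal power series of `Mnu ν`. -/
def pS (ν : ℝ) : FormalMultilinearSeries ℂ ℂ ℂ :=
  FormalMultilinearSeries.ofScalars ℂ (aC ν)

lemma pS_radius {ν : ℝ} (hν : -1 < ν) : (pS ν).radius = ⊤ := by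
  apply FormalMultilinearSeries.ofScalars_radius_eq_top_of_tendsto
  · exact Filter.Eventually.of_forall fun k => aC_ne hν k
  · have hbound : ∀ n : ℕ, ‖aC ν (n + 1)‖ / ‖aC ν n‖ ≤ (ν + 1)⁻¹ * (1 / (n + 1)) := by
      intro n
      have hnorm : ‖aC ν (n + 1)‖ = ‖aC ν n‖ / ((n + 1) * (ν + n + 1)) := by
        rw [aC_succ' hν n, norm_div, norm_neg, norm_mul]
        congr 1
        have e1 : ((n : ℂ) + 1) = ((n + 1 : ℝ) : ℂ) := by push_cast; ring
        have e2 : ((ν : ℂ) + (n : ℂ) + 1) = ((ν + n + 1 : ℝ) : ℂ) := by push_cast; ring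
        rw [e1, e2, Complex.norm_real, Complex.norm_real, Real.norm_eq_abs, Real.norm_eq_abs,
          abs_of_pos (by positivity), abs_of_pos (by
            have : (0 : ℝ) ≤ (n : ℝ) := Nat.cast_nonneg n
            linarith)]
      have hpos : (0 : ℝ) < ‖aC ν n‖ := norm_pos_iff.mpr (aC_ne hν n)
      have hn0 : (0 : ℝ) ≤ (n : ℝ) := Nat.cast_nonneg n
      have hratio : ‖aC ν (n + 1)‖ / ‖aC ν n‖ = (((n : ℝ) + 1) * (ν + n + 1))⁻¹ := by
        rw [hnorm, div_div, mul_comm (((n : ℝ) + 1) * (ν + n + 1)) ‖aC ν n‖, ← div_div,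
          div_self hpos.ne', one_div]
      have hrhs : (ν + 1)⁻¹ * (1 / ((n : ℝ) + 1)) = (((n : ℝ) + 1) * (ν + 1))⁻¹ := by
        rw [mul_inv, one_div]; ring
      rw [hratio, hrhs]
      exact inv_anti₀ (by nlinarith) (by nlinarith)
    have h0 : ∀ n : ℕ, 0 ≤ ‖aC ν (n + 1)‖ / ‖aC ν n‖ := fun n => by positivity
    have htend : Filter.Tendsto (fun n : ℕ => (ν + 1)⁻¹ * (1 / ((n : ℝ) + 1)))
        Filter.atTop (nhds 0) := by
      have := tendsto_one_div_add_atTop_nhds_zero_nat (𝕜 := ℝ)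
      have h := this.const_mul ((ν + 1)⁻¹)
      simpa using h
    exact squeeze_zero h0 hbound htend

lemma Mnu_eq_tsum (ν : ℝ) (s : ℂ) : Mnu ν s = ∑' k : ℕ, aC ν k * s ^ k := by
  unfold Mnu aC
  exact tsum_congr fun k => (div_mul_eq_mul_div _ _ _).symm

lemma Mnu_eq_sum (ν : ℝ) : Mnu ν = (pS ν).sum := by
  funext s
  rw [Mnu_eq_tsum]
  have h := FormalMultilinearSeries.ofScalars_sum_eq (𝕜 := ℂ) (E := ℂ) (aC ν) s
  have h2 : (pS ν).sum s = FormalMultilinearSeries.ofScalarsSum (aC ν) s := rfl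
  rw [h2, h]
  exact tsum_congr fun k => by rw [smul_eq_mul]

lemma hasFPS {ν : ℝ} (hν : -1 < ν) : HasFPowerSeriesOnBall (Mnu ν) (pS ν) 0 ⊤ := by
  rw [Mnu_eq_sum]
  have h0 : 0 < (pS ν).radius := by rw [pS_radius hν]; exact ENNReal.zero_lt_top
  have h := (pS ν).hasFPowerSeriesOnBall h0
  rwa [pS_radius hν] at h

lemma Mnu_hasSum {ν : ℝ} (hν : -1 < ν) (s : ℂ) :
    HasSum (fun k : ℕ => aC ν k * s ^ k) (Mnu ν s) := by
  have h := (hasFPS hν).hasSum (y := s) (EMetric.mem_ball.mpr (edist_lt_top _ _))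
  rw [zero_add] at h
  have h3 : ∀ n : ℕ, (pS ν n fun _ => s) = aC ν n * s ^ n := fun n => by
    rw [pS, FormalMultilinearSeries.ofScalars_apply_eq, smul_eq_mul]
  simpa only [h3] using h

lemma Mnu_diff {ν : ℝ} (hν : -1 < ν) : Differentiable ℂ (Mnu ν) := by
  have hball : Metric.eball (0 : ℂ) ⊤ = univ := by
    ext y; simp [Metric.mem_eball, edist_lt_top]
  have h := (hasFPS hν).differentiableOn
  rw [hball] at h
  exact fun x => (h x (mem_univ x)).differentiableAt Filter.univ_mem

lemma Mnu_analytic {ν : ℝ} (hν : -1 < ν) : AnalyticOnNhd ℂ (Mnu ν) univ :=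
  (Mnu_diff hν).differentiableOn.analyticOnNhd isOpen_univ

lemma Mnu_deriv {ν : ℝ} (hν : -1 < ν) (s : ℂ) : deriv (Mnu ν) s = -Mnu (ν + 1) s := by
  have hν1 : (-1 : ℝ) < ν + 1 := by linarith
  have hcont1 : Continuous (deriv (Mnu ν)) := by
    have h := (Mnu_analytic hν).deriv
    exact continuousOn_univ.mp h.continuousOn
  have hcont2 : Continuous (fun s : ℂ => -Mnu (ν + 1) s) := ((Mnu_diff hν1).continuous).neg
  have hEq : Set.EqOn (deriv (Mnu ν)) (fun s : ℂ => -Mnu (ν + 1) s) ({0}ᶜ : Set ℂ) := by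
    intro y hy
    have hy0 : y ≠ 0 := hy
    have hd := (hasFPS hν).fderiv
    have h1 := hd.hasSum (y := y) (EMetric.mem_ball.mpr (edist_lt_top _ _))
    rw [zero_add] at h1
    have h2 := h1.mapL (ContinuousLinearMap.apply ℂ ℂ y)
    have h3 : ∀ n : ℕ, (ContinuousLinearMap.apply ℂ ℂ y) ((pS ν).derivSeries n fun _ => y)
        = -(aC (ν + 1) n * y ^ n) * y := by
      intro n
      have hdiag := (pS ν).derivSeries_apply_diag n y
      have happ : (ContinuousLinearMap.apply ℂ ℂ y) ((pS ν).derivSeries n fun _ => y)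
          = ((pS ν).derivSeries n fun _ => y) y := rfl
      rw [happ, hdiag, pS, FormalMultilinearSeries.ofScalars_apply_eq, nsmul_eq_mul,
        smul_eq_mul]
      have hrec := aC_succ hν n
      push_cast
      linear_combination y ^ (n + 1) * hrec
    have h2' : HasSum (fun n : ℕ => -(aC (ν + 1) n * y ^ n) * y)
        ((ContinuousLinearMap.apply ℂ ℂ y) (fderiv ℂ (Mnu ν) y)) := by
      simpa only [h3] using h2
    have h4 : HasSum (fun n : ℕ => -(aC (ν + 1) n * y ^ n) * y) (-Mnu (ν + 1) y * y) :=
      ((Mnu_hasSum hν1 y).neg).mul_right y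
    have h5 : (ContinuousLinearMap.apply ℂ ℂ y) (fderiv ℂ (Mnu ν) y) = -Mnu (ν + 1) y * y :=
      h2'.unique h4
    have h6 : (ContinuousLinearMap.apply ℂ ℂ y) (fderiv ℂ (Mnu ν) y)
        = deriv (Mnu ν) y * y := by
      have : fderiv ℂ (Mnu ν) y y = fderiv ℂ (Mnu ν) y (y • (1 : ℂ)) := by
        rw [smul_eq_mul, mul_one]
      calc (ContinuousLinearMap.apply ℂ ℂ y) (fderiv ℂ (Mnu ν) y)
          = fderiv ℂ (Mnu ν) y y := rfl
        _ = y • fderiv ℂ (Mnu ν) y (1 : ℂ) := by rw [this, (fderiv ℂ (Mnu ν) y).map_smul]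
        _ = deriv (Mnu ν) y * y := by rw [fderiv_apply_one_eq_deriv, smul_eq_mul, mul_comm]
    have := h6.symm.trans h5
    exact mul_right_cancel₀ hy0 this
  have := hcont1.ext_on (dense_compl_singleton (0 : ℂ)) hcont2 hEq
  exact congrFun this s

lemma Mnu_hasDerivAt {ν μ : ℝ} (hν : -1 < ν) (hμ : μ = ν + 1) (s : ℂ) :
    HasDerivAt (Mnu ν) (-Mnu μ s) s := by
  subst hμ
  have h := ((Mnu_diff hν) s).hasDerivAt
  rwa [Mnu_deriv hν] at h

lemma Mnu_rec {ν : ℝ} (hν : 0 < ν) (s : ℂ) :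
    Mnu (ν - 1) s = (ν : ℂ) * Mnu ν s - s * Mnu (ν + 1) s := by
  have hν1 : (-1 : ℝ) < ν := by linarith
  have hν2 : (-1 : ℝ) < ν + 1 := by linarith
  set b : ℕ → ℂ := fun k => (k : ℂ) * aC ν k * s ^ k with hb
  have hb0 : ∀ x ∉ Set.range Nat.succ, b x = 0 := by
    intro x hx
    match x with
    | 0 => simp [hb]
    | n + 1 => exact absurd ⟨n, rfl⟩ hx
  have hcomp : (b ∘ Nat.succ) = fun j : ℕ => (-s) * (aC (ν + 1) j * s ^ j) := by
    funext j
    simp only [Function.comp, hb, Nat.succ_eq_add_one]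
    have hrec := aC_succ hν1 j
    push_cast
    linear_combination s ^ (j + 1) * hrec
  have h2 : HasSum b (-s * Mnu (ν + 1) s) := by
    refine (Nat.succ_injective.hasSum_iff hb0).mp ?_
    rw [hcomp]
    exact (Mnu_hasSum hν2 s).mul_left (-s)
  have h1 := (Mnu_hasSum hν1 s).mul_left (ν : ℂ)
  have h3 := h1.add h2
  have hterm : (fun k : ℕ => (ν : ℂ) * (aC ν k * s ^ k) + b k)
      = fun k : ℕ => aC (ν - 1) k * s ^ k := by
    funext k
    rw [hb, aC_rec hν k]
    ring
  rw [hterm] at h3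
  rw [Mnu_eq_tsum, h3.tsum_eq]
  ring

lemma Mnu_zero (ν : ℝ) : Mnu ν 0 = 1 / Complex.Gamma ((ν : ℂ) + 1) := by
  rw [Mnu_eq_tsum]
  rw [tsum_eq_single 0 (fun k hk => by simp [zero_pow hk])]
  simp [aC]

/-- The Wronskian-type combination. -/
def Fc : ℂ → ℂ := fun s =>
  Mnu (-3/4) s * Mnu (-1/4) s + s * (Mnu (1/4) s * Mnu (3/4) s)

lemma Fc_const (s : ℂ) : Fc s = Fc 0 := by
  apply is_const_of_deriv_eq_zero
  · exact ((Mnu_diff (by norm_num)).mul (Mnu_diff (by norm_num))).add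
      (differentiable_fun_id.mul ((Mnu_diff (by norm_num)).mul (Mnu_diff (by norm_num))))
  · intro y
    have d1 := Mnu_hasDerivAt (ν := -3/4) (μ := 1/4) (by norm_num) (by norm_num) y
    have d2 := Mnu_hasDerivAt (ν := -1/4) (μ := 3/4) (by norm_num) (by norm_num) y
    have d3 := Mnu_hasDerivAt (ν := 1/4) (μ := 5/4) (by norm_num) (by norm_num) y
    have d4 := Mnu_hasDerivAt (ν := 3/4) (μ := 7/4) (by norm_num) (by norm_num) y
    have dF : HasDerivAt Fc
        ((-Mnu (1/4) y) * Mnu (-1/4) y + Mnu (-3/4) y * (-Mnu (3/4) y)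
          + (1 * (Mnu (1/4) y * Mnu (3/4) y)
            + y * ((-Mnu (5/4) y) * Mnu (3/4) y + Mnu (1/4) y * (-Mnu (7/4) y)))) y :=
      (d1.mul d2).add ((hasDerivAt_id y).mul (d3.mul d4))
    rw [dF.deriv]
    have r1 := Mnu_rec (show (0 : ℝ) < 1/4 by norm_num) y
    have r2 := Mnu_rec (show (0 : ℝ) < 3/4 by norm_num) y
    have e1 : (1/4 : ℝ) - 1 = -3/4 := by norm_num
    have e2 : (1/4 : ℝ) + 1 = 5/4 := by norm_num
    have e3 : (3/4 : ℝ) - 1 = -1/4 := by norm_num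
    have e4 : (3/4 : ℝ) + 1 = 7/4 := by norm_num
    rw [e1, e2] at r1
    rw [e3, e4] at r2
    push_cast at r1 r2
    linear_combination (-(Mnu (3/4) y)) * r1 + (-(Mnu (1/4) y)) * r2

lemma Fc_zero_ne : Fc 0 ≠ 0 := by
  unfold Fc
  rw [Mnu_zero, Mnu_zero]
  simp only [mul_zero, zero_mul, add_zero]
  exact mul_ne_zero (one_div_ne_zero (gamma1_ne (by norm_num)))
    (one_div_ne_zero (gamma1_ne (by norm_num)))

lemma no_common_zero (x : ℂ) (h1 : Mnu (-1/4) x = 0) (h2 : Mnu (1/4) x = 0) : False := by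
  have h := Fc_const x
  rw [Fc] at h
  rw [h1, h2] at h
  simp only [mul_zero, zero_mul, add_zero, zero_add, mul_zero] at h
  exact Fc_zero_ne h.symm

lemma Mnu_real (ν : ℝ) (r : ℝ) : ∃ y : ℝ, Mnu ν ((r : ℝ) : ℂ) = (y : ℂ) := by
  refine ⟨∑' k : ℕ, (-1) ^ k * r ^ k / ((k.factorial : ℝ) * Real.Gamma (ν + k + 1)), ?_⟩
  rw [Complex.ofReal_tsum]
  unfold Mnu
  apply tsum_congr
  intro k
  have he : ((ν : ℂ) + (k : ℂ) + 1) = ((ν + k + 1 : ℝ) : ℂ) := by push_cast; ring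
  rw [he, Complex.Gamma_ofReal]
  push_cast
  ring

end WtildeAux

open WtildeAux in
/-- For `ε > 0` and non-real `κ`, the function `t ↦ w̃_ε(t,κ)` is entire and does not
vanish at any real `t`. -/
theorem wtilde_entire_and_nonvanishing_on_real
    (ε : ℝ) (hε : 0 < ε) (κ : ℂ) (hκ : κ ∉ Set.range ((↑) : ℝ → ℂ)) :
    AnalyticOnNhd ℂ (wtilde ε κ) Set.univ ∧ ∀ t : ℝ, wtilde ε κ (t : ℂ) ≠ 0 := by
  constructor
  · have hpoly : Differentiable ℂ (fun t : ℂ => (ε : ℂ) ^ 2 * t ^ 4 / 16) := by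
      apply Differentiable.div_const
      exact (differentiable_const _).mul (differentiable_pow 4)
    have hw : Differentiable ℂ (wtilde ε κ) := by
      unfold wtilde
      refine Differentiable.add ?_ ?_
      · exact (((Mnu_diff (by norm_num)).comp hpoly)).neg
      · refine Differentiable.mul ?_ ((Mnu_diff (by norm_num)).comp hpoly)
        apply Differentiable.div_const
        exact (differentiable_const _).mul differentiable_fun_id
    exact hw.differentiableOn.analyticOnNhd isOpen_univ
  · intro t h0
    unfold wtilde at h0
    have hx : ((ε : ℂ) ^ 2 * ((t : ℝ) : ℂ) ^ 4 / 16) = ((ε ^ 2 * t ^ 4 / 16 : ℝ) : ℂ) := by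
      push_cast; ring
    rw [hx] at h0
    set x : ℝ := ε ^ 2 * t ^ 4 / 16 with hxdef
    obtain ⟨A, hA⟩ := Mnu_real (-1/4) x
    obtain ⟨B, hB⟩ := Mnu_real (1/4) x
    rw [hA, hB] at h0
    by_cases hB0 : Real.sqrt ε * t * B = 0
    · have hA0 : A = 0 := by
        have hrw : κ * ((Real.sqrt ε : ℝ) : ℂ) * ((t : ℝ) : ℂ) / 2 * ((B : ℝ) : ℂ)
            = κ * (((Real.sqrt ε * t * B : ℝ) : ℂ) / 2) := by push_cast; ring
        rw [hrw, hB0] at h0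
        push_cast at h0
        have : -(A : ℂ) = 0 := by linear_combination h0
        exact_mod_cast neg_eq_zero.mp this
      rcases mul_eq_zero.mp hB0 with h | hBz
      · rcases mul_eq_zero.mp h with hs | ht
        · exact absurd hs (Real.sqrt_pos.mpr hε).ne'
        · -- t = 0, so x = 0 and Mnu (-1/4) 0 ≠ 0
          have hx0 : x = 0 := by rw [hxdef, ht]; ring
          rw [hx0, hA0] at hA
          have hz := Mnu_zero (-1/4)
          rw [Complex.ofReal_zero] at hA
          rw [hA] at hz
          exact (one_div_ne_zero (gamma1_ne (by norm_num : (-1:ℝ) < -1/4))) hz.symm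
      · -- common zero
        apply no_common_zero ((x : ℝ) : ℂ)
        · rw [hA, hA0, Complex.ofReal_zero]
        · rw [hB, hBz, Complex.ofReal_zero]
    · apply hκ
      have h2 : κ * ((Real.sqrt ε * t * B / 2 : ℝ) : ℂ) = (A : ℂ) := by
        push_cast
        linear_combination h0
      have hc : ((Real.sqrt ε * t * B / 2 : ℝ) : ℂ) ≠ 0 := by
        have : (Real.sqrt ε * t * B / 2 : ℝ) ≠ 0 := div_ne_zero hB0 two_ne_zero
        exact_mod_cast this
      refine ⟨A / (Real.sqrt ε * t * B / 2), ?_⟩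
      rw [Complex.ofReal_div]
      rw [div_eq_iff hc]
      exact h2.symm ▸ (mul_comm κ _ ▸ h2).symm ▸ rfl

end
end

section
/- Let ε > 0 and κ ∈ ℂ with κ ∉ ℝ, and define l_ε(t,κ) = −i·(∂_t w̃_ε(t,κ))/w̃_ε(t,κ) for t ∈ ℝ (the denominator does not vanish for real t). Then l_ε(·,κ) is differentiable on ℝ and satisfies the Riccati equation l_ε'(t,κ) + i·l_ε(t,κ)² = i·ε²·t² for all t ∈ ℝ. -/
open Complex MeasureTheory Set

noncomputable section

namespace RicAux
def cterm (ν : ℝ) (s : ℂ) (k : ℕ) : ℂ :=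
  (-1) ^ k * s ^ k / ((k.factorial : ℂ) * Complex.Gamma ((ν : ℂ) + (k : ℂ) + 1))
lemma cterm_def (ν : ℝ) (s : ℂ) (k : ℕ) : cterm ν s k =
  (-1) ^ k * s ^ k / ((k.factorial : ℂ) * Complex.Gamma ((ν : ℂ) + (k : ℂ) + 1)) := rfl
lemma Mnu_eq_tsum (ν : ℝ) (s : ℂ) : Mnu ν s = ∑' k, cterm ν s k := rfl
lemma gammaC_eq (ν : ℝ) (k : ℕ) :
    Complex.Gamma ((ν : ℂ) + (k : ℂ) + 1) = ((Real.Gamma (ν + k + 1) : ℝ) : ℂ) := by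
  rw [show ((ν : ℂ) + (k : ℂ) + 1) = ((ν + k + 1 : ℝ) : ℂ) by push_cast; ring,
    Complex.Gamma_ofReal]

lemma gammaR_pos {ν : ℝ} (hν : -1 < ν) (k : ℕ) : 0 < Real.Gamma (ν + k + 1) :=
  Real.Gamma_pos_of_pos (by have : (0:ℝ) ≤ k := Nat.cast_nonneg k; linarith)

lemma gammaC_ne {ν : ℝ} (hν : -1 < ν) (k : ℕ) :
    Complex.Gamma ((ν : ℂ) + (k : ℂ) + 1) ≠ 0 := by
  rw [gammaC_eq]
  exact_mod_cast (gammaR_pos hν k).ne'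

lemma gamma_lb {ν : ℝ} (hν : -(3/4 : ℝ) ≤ ν) (n : ℕ) :
    Real.Gamma (ν + 1) * n.factorial ≤ Real.Gamma (ν + n + 1) * 4 ^ n := by
  induction n with
  | zero => simp
  | succ n ih =>
      have hpos := gammaR_pos (by linarith : (-1:ℝ) < ν) n
      have hn : (0:ℝ) ≤ n := Nat.cast_nonneg n
      have h1 : Real.Gamma (ν + (n+1:ℕ) + 1) = (ν + n + 1) * Real.Gamma (ν + n + 1) := by
        rw [show ν + ((n:ℕ)+1:ℕ) + 1 = (ν + n + 1) + 1 by push_cast; ring]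
        exact Real.Gamma_add_one (by linarith)
      rw [h1, Nat.factorial_succ]
      push_cast
      have h4 : (n:ℝ)+1 ≤ 4*(ν + n + 1) := by linarith
      have hp4 : (0:ℝ) < 4 ^ n := pow_pos (by norm_num) n
      calc Real.Gamma (ν + 1) * (((n:ℝ) + 1) * n.factorial)
          = ((n:ℝ)+1) * (Real.Gamma (ν + 1) * n.factorial) := by ring
        _ ≤ ((n:ℝ)+1) * (Real.Gamma (ν + n + 1) * 4 ^ n) := by
            apply mul_le_mul_of_nonneg_left ih (by linarith)
        _ ≤ (4*(ν + n + 1)) * (Real.Gamma (ν + n + 1) * 4 ^ n) := by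
            apply mul_le_mul_of_nonneg_right h4 (by positivity)
        _ = (ν + n + 1) * Real.Gamma (ν + n + 1) * 4 ^ (n+1) := by ring

lemma norm_cterm {ν : ℝ} (hν : -1 < ν) (z : ℂ) (k : ℕ) :
    ‖cterm ν z k‖ = ‖z‖ ^ k / (k.factorial * Real.Gamma (ν + k + 1)) := by
  rw [cterm_def, gammaC_eq]
  simp only [norm_div, norm_mul, norm_pow, norm_neg, norm_one, one_pow, one_mul,
    Complex.norm_natCast, Complex.norm_real, Real.norm_eq_abs]
  rw [abs_of_pos (gammaR_pos hν k)]

lemma fact_ge_one (k : ℕ) : (1:ℝ) ≤ k.factorial := by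
  exact_mod_cast Nat.one_le_iff_ne_zero.2 (Nat.factorial_ne_zero k)

lemma inv_gamma_le {ν : ℝ} (hν : -(3/4 : ℝ) ≤ ν) (k : ℕ) :
    1 / Real.Gamma (ν + k + 1) ≤ 4 ^ k / (Real.Gamma (ν + 1) * k.factorial) := by
  have h1 := gammaR_pos (by linarith : (-1:ℝ) < ν) k
  have h2 : (0:ℝ) < Real.Gamma (ν + 1) := by
    simpa using gammaR_pos (by linarith : (-1:ℝ) < ν) 0
  have h3 := fact_ge_one k
  rw [div_le_div_iff₀ h1 (by positivity)]
  nlinarith [gamma_lb hν k]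

/-- main bound: `‖cterm ν z k‖ ≤ Γ(ν+1)⁻¹ (4(R+1))^k/k!` for `‖z‖ ≤ R`, `0 ≤ R`. -/
lemma norm_cterm_le {ν : ℝ} (hν : -(3/4 : ℝ) ≤ ν) {z : ℂ} {R : ℝ} (hR : 0 ≤ R)
    (hz : ‖z‖ ≤ R) (k : ℕ) :
    ‖cterm ν z k‖ ≤ (Real.Gamma (ν + 1))⁻¹ * ((4 * (R + 1)) ^ k / k.factorial) := by
  have h2 : (0:ℝ) < Real.Gamma (ν + 1) := by
    simpa using gammaR_pos (by linarith : (-1:ℝ) < ν) 0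
  have h3 := fact_ge_one k
  have h1 := gammaR_pos (by linarith : (-1:ℝ) < ν) k
  rw [norm_cterm (by linarith) z k]
  have hb : ‖z‖ ^ k ≤ (R + 1) ^ k := by
    apply pow_le_pow_left₀ (norm_nonneg z) (by linarith)
  calc ‖z‖ ^ k / (k.factorial * Real.Gamma (ν + k + 1))
      = ‖z‖ ^ k * (1 / Real.Gamma (ν + k + 1)) / k.factorial := by ring
    _ ≤ (R+1) ^ k * (4 ^ k / (Real.Gamma (ν + 1) * k.factorial)) / k.factorial := by
        apply div_le_div_of_nonneg_right ?_ (by linarith)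
        · exact mul_le_mul hb (inv_gamma_le hν k) (by positivity) (by positivity)
    _ = (Real.Gamma (ν + 1))⁻¹ * ((4 * (R + 1)) ^ k / (k.factorial * k.factorial)) := by
        rw [mul_pow]; field_simp
    _ ≤ (Real.Gamma (ν + 1))⁻¹ * ((4 * (R + 1)) ^ k / k.factorial) := by
        apply mul_le_mul_of_nonneg_left ?_ (by positivity)
        apply div_le_div_of_nonneg_left (by positivity) (by linarith) ?_
        nlinarith [h3]


lemma k_norm_bound {ν : ℝ} (hν : -(3/4 : ℝ) ≤ ν) {R : ℝ} (k : ℕ) {X : ℝ} (hX : 0 ≤ X)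
    (hXb : X ≤ (R + 1) ^ k) (hR1 : (0:ℝ) ≤ R + 1) :
    (k : ℝ) * X / (k.factorial * Real.Gamma (ν + k + 1))
      ≤ (Real.Gamma (ν + 1))⁻¹ * ((8 * (R + 1)) ^ k / k.factorial) := by
  have h2 : (0:ℝ) < Real.Gamma (ν + 1) := by
    simpa using gammaR_pos (by linarith : (-1:ℝ) < ν) 0
  have h3 := fact_ge_one k
  have h1 := gammaR_pos (by linarith : (-1:ℝ) < ν) k
  have hk2 : (k : ℝ) ≤ 2 ^ k := by exact_mod_cast (Nat.lt_two_pow_self (n := k)).le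
  calc (k : ℝ) * X / (k.factorial * Real.Gamma (ν + k + 1))
      = ((k:ℝ) * X) * (1 / Real.Gamma (ν + k + 1)) / k.factorial := by ring
    _ ≤ (2 ^ k * (R+1) ^ k) * (4 ^ k / (Real.Gamma (ν + 1) * k.factorial)) / k.factorial := by
        apply div_le_div_of_nonneg_right ?_ (by linarith)
        apply mul_le_mul ?_ (inv_gamma_le hν k) (by positivity) (by positivity)
        exact mul_le_mul hk2 hXb hX (by positivity)
    _ = (Real.Gamma (ν + 1))⁻¹ * ((8 * (R + 1)) ^ k / (k.factorial * k.factorial)) := by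
        rw [mul_pow, show (8:ℝ) = 2 * 4 by norm_num, mul_pow]; field_simp
    _ ≤ (Real.Gamma (ν + 1))⁻¹ * ((8 * (R + 1)) ^ k / k.factorial) := by
        apply mul_le_mul_of_nonneg_left ?_ (by positivity)
        apply div_le_div_of_nonneg_left (by positivity) (by linarith) ?_
        nlinarith [h3]

/-- bound with an extra factor `k` and one lower power of `z`. -/
lemma norm_cterm_deriv_le {ν : ℝ} (hν : -(3/4 : ℝ) ≤ ν) {z : ℂ} {R : ℝ} (hR : 0 ≤ R)
    (hz : ‖z‖ ≤ R) (k : ℕ) :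
    (k : ℝ) * ‖z‖ ^ (k-1) / (k.factorial * Real.Gamma (ν + k + 1))
      ≤ (Real.Gamma (ν + 1))⁻¹ * ((8 * (R + 1)) ^ k / k.factorial) := by
  apply k_norm_bound hν k (by positivity) ?_ (by linarith)
  calc ‖z‖ ^ (k-1) ≤ (R+1) ^ (k-1) := by
        apply pow_le_pow_left₀ (norm_nonneg z) (by linarith)
    _ ≤ (R+1) ^ k := pow_le_pow_right₀ (by linarith) (Nat.sub_le k 1)

lemma summable_bound (G C : ℝ) : Summable (fun k : ℕ => G * (C ^ k / k.factorial)) :=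
  (Real.summable_pow_div_factorial C).mul_left G

lemma summable_cterm {ν : ℝ} (hν : -(3/4 : ℝ) ≤ ν) (z : ℂ) :
    Summable (fun k => cterm ν z k) := by
  apply Summable.of_norm
  apply Summable.of_nonneg_of_le (fun k => norm_nonneg _)
    (fun k => norm_cterm_le hν (norm_nonneg z) le_rfl k)
    (summable_bound _ _)

lemma summable_k_cterm {ν : ℝ} (hν : -(3/4 : ℝ) ≤ ν) (z : ℂ) :
    Summable (fun k : ℕ => (k : ℂ) * cterm ν z k) := by
  apply Summable.of_norm
  apply Summable.of_nonneg_of_le (fun k => norm_nonneg _) ?_ (summable_bound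
    ((Real.Gamma (ν + 1))⁻¹) (8 * (‖z‖ + 1)))
  intro k
  rw [norm_mul, Complex.norm_natCast, norm_cterm (by linarith) z k]
  rw [show (k:ℝ) * (‖z‖ ^ k / (k.factorial * Real.Gamma (ν + k + 1)))
      = (k:ℝ) * ‖z‖ ^ k / (k.factorial * Real.Gamma (ν + k + 1)) by ring]
  apply k_norm_bound hν k (by positivity) ?_ (by positivity)
  apply pow_le_pow_left₀ (norm_nonneg z) (by linarith)


def dterm (ν : ℝ) (z : ℂ) (k : ℕ) : ℂ :=
  (-1) ^ k / ((k.factorial : ℂ) * Complex.Gamma ((ν : ℂ) + (k : ℂ) + 1)) * (k * z ^ (k-1))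

lemma norm_dterm {ν : ℝ} (hν : -1 < ν) (z : ℂ) (k : ℕ) :
    ‖dterm ν z k‖ = k * ‖z‖ ^ (k-1) / (k.factorial * Real.Gamma (ν + k + 1)) := by
  rw [dterm, gammaC_eq]
  simp only [norm_mul, norm_div, norm_pow, norm_neg, norm_one, one_pow,
    Complex.norm_natCast, Complex.norm_real, Real.norm_eq_abs]
  rw [abs_of_pos (gammaR_pos hν k)]
  ring

lemma summable_dterm {ν : ℝ} (hν : -(3/4 : ℝ) ≤ ν) {z : ℂ} {R : ℝ} (hR : 0 ≤ R)
    (hz : ‖z‖ ≤ R) : Summable (fun k => dterm ν z k) := by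
  apply Summable.of_norm
  apply Summable.of_nonneg_of_le (fun k => norm_nonneg _) ?_
    (summable_bound ((Real.Gamma (ν + 1))⁻¹) (8 * (R + 1)))
  intro k
  rw [norm_dterm (by linarith) z k]
  exact norm_cterm_deriv_le hν hR hz k

lemma dterm_succ (ν : ℝ) {s : ℂ} (hν : -1 < ν) (k : ℕ) :
    dterm ν s (k+1) = -cterm (ν+1) s k := by
  rw [dterm, cterm_def]
  have harg : ((ν:ℂ)) + ((k:ℕ)+1 : ℕ) + 1 = ((ν+1 : ℝ):ℂ) + (k:ℂ) + 1 := by push_cast; ring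
  rw [harg]
  have hg := gammaC_ne (by linarith : (-1:ℝ) < ν+1) k
  have hf : ((k+1).factorial : ℂ) = ((k+1 : ℕ) : ℂ) * (k.factorial : ℂ) := by
    rw [Nat.factorial_succ]; push_cast; ring
  rw [hf, Nat.add_sub_cancel]
  have hfk : ((k.factorial : ℕ) : ℂ) ≠ 0 := by exact_mod_cast Nat.factorial_ne_zero k
  have hk1 : ((k+1 : ℕ) : ℂ) ≠ 0 := by exact_mod_cast Nat.succ_ne_zero k
  set K : ℂ := ((k+1 : ℕ) : ℂ) with hK
  set F : ℂ := ((k.factorial : ℕ) : ℂ) with hF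
  set G : ℂ := Complex.Gamma (((ν+1:ℝ):ℂ) + (k:ℂ) + 1) with hG
  field_simp
  ring

lemma Mnu_hasDerivAt {ν : ℝ} (hν : -(3/4 : ℝ) ≤ ν) (s : ℂ) :
    HasDerivAt (Mnu ν) (-Mnu (ν+1) s) s := by
  have hν1 : (-1:ℝ) < ν := by linarith
  set R : ℝ := ‖s‖ + 1 with hRdef
  have hR0 : (0:ℝ) ≤ R := by positivity
  have hball : ∀ z : ℂ, z ∈ Metric.ball (0:ℂ) R → ‖z‖ ≤ R := by
    intro z hz
    rw [Metric.mem_ball, dist_zero_right] at hz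
    exact hz.le
  have hsball : s ∈ Metric.ball (0:ℂ) R := by
    rw [Metric.mem_ball, dist_zero_right]; simp [hRdef]
  have hg : ∀ (k : ℕ) (z : ℂ), z ∈ Metric.ball (0:ℂ) R →
      HasDerivAt (fun w => cterm ν w k) (dterm ν z k) z := by
    intro k z _
    have h := (hasDerivAt_pow k z).const_mul
      ((-1 : ℂ) ^ k / ((k.factorial : ℂ) * Complex.Gamma ((ν : ℂ) + (k : ℂ) + 1)))
    have he : (fun w : ℂ => cterm ν w k)
        = fun w : ℂ => (-1:ℂ) ^ k / ((k.factorial : ℂ)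
            * Complex.Gamma ((ν : ℂ) + (k : ℂ) + 1)) * w ^ k := by
      funext w; rw [cterm_def]; ring
    rw [he, dterm]
    convert h using 1
  have hg' : ∀ (k : ℕ) (z : ℂ), z ∈ Metric.ball (0:ℂ) R →
      ‖dterm ν z k‖ ≤ (Real.Gamma (ν + 1))⁻¹ * ((8 * (R + 1)) ^ k / k.factorial) := by
    intro k z hz
    rw [norm_dterm hν1 z k]
    exact norm_cterm_deriv_le hν hR0 (hball z hz) k
  have main : HasDerivAt (fun z => ∑' k, cterm ν z k) (∑' k, dterm ν s k) s :=
    hasDerivAt_tsum_of_isPreconnected (g := fun k z => cterm ν z k)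
      (g' := fun k z => dterm ν z k)
      (summable_bound ((Real.Gamma (ν + 1))⁻¹) (8 * (R + 1)))
      Metric.isOpen_ball ((convex_ball (0:ℂ) R).isPreconnected)
      hg hg' hsball (summable_cterm hν s) hsball
  have hsum' : ∑' k, dterm ν s k = -Mnu (ν+1) s := by
    rw [Summable.tsum_eq_zero_add (summable_dterm hν hR0 (by simp [hRdef]))]
    have h0 : dterm ν s 0 = 0 := by simp [dterm]
    rw [h0, zero_add, Mnu_eq_tsum, ← tsum_neg]
    exact tsum_congr fun k => dterm_succ ν hν1 k
  rw [← hsum']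
  exact main


lemma cterm_succ_eq {ν : ℝ} (hν : -1 < ν) (s : ℂ) (k : ℕ) :
    ((k:ℂ)+1) * cterm ν s (k+1) = -s * cterm (ν+1) s k := by
  rw [cterm_def, cterm_def]
  have harg : ((ν:ℂ)) + ((k:ℕ)+1 : ℕ) + 1 = ((ν+1 : ℝ):ℂ) + (k:ℂ) + 1 := by push_cast; ring
  rw [harg]
  have hg := gammaC_ne (by linarith : (-1:ℝ) < ν+1) k
  have hf : ((k+1).factorial : ℂ) = ((k+1 : ℕ) : ℂ) * (k.factorial : ℂ) := by
    rw [Nat.factorial_succ]; push_cast; ring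
  rw [hf]
  have hfk : ((k.factorial : ℕ) : ℂ) ≠ 0 := by exact_mod_cast Nat.factorial_ne_zero k
  have hk1 : ((k+1 : ℕ) : ℂ) ≠ 0 := by exact_mod_cast Nat.succ_ne_zero k
  have hKc : ((k+1 : ℕ) : ℂ) = (k:ℂ)+1 := by push_cast; ring
  rw [← hKc]
  set K : ℂ := ((k+1 : ℕ) : ℂ) with hK
  set F : ℂ := ((k.factorial : ℕ) : ℂ) with hF
  set G : ℂ := Complex.Gamma (((ν+1:ℝ):ℂ) + (k:ℂ) + 1) with hG
  field_simp
  ring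

lemma tsum_k_cterm {ν : ℝ} (hν : -(3/4 : ℝ) ≤ ν) (s : ℂ) :
    ∑' k : ℕ, (k:ℂ) * cterm ν s k = -s * Mnu (ν+1) s := by
  rw [Summable.tsum_eq_zero_add (summable_k_cterm hν s)]
  simp only [Nat.cast_zero, zero_mul, zero_add]
  rw [Mnu_eq_tsum, show -s * ∑' k, cterm (ν+1) s k = ∑' k, -s * cterm (ν+1) s k from
    (tsum_mul_left).symm]
  apply tsum_congr
  intro k
  rw [← cterm_succ_eq (by linarith : (-1:ℝ) < ν) s k]
  push_cast
  ring

lemma Mnu_rec {ν : ℝ} (hν : -(3/4 : ℝ) ≤ ν) (s : ℂ) :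
    Mnu ν s = ((ν:ℂ)+1) * Mnu (ν+1) s - s * Mnu (ν+2) s := by
  have hν1 : (-1:ℝ) < ν := by linarith
  have key : ∀ k : ℕ, cterm ν s k - ((ν:ℂ)+1) * cterm (ν+1) s k = (k:ℂ) * cterm (ν+1) s k := by
    intro k
    rw [cterm_def, cterm_def]
    have harg : (((ν+1:ℝ)):ℂ) + (k:ℂ) + 1 = ((ν:ℂ) + (k:ℂ) + 1) + 1 := by push_cast; ring
    have hnz : ((ν:ℂ) + (k:ℂ) + 1) ≠ 0 := by
      rw [show ((ν:ℂ) + (k:ℂ) + 1) = ((ν + k + 1 : ℝ) : ℂ) by push_cast; ring]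
      exact_mod_cast (by have : (0:ℝ) ≤ k := Nat.cast_nonneg k; linarith :
        (ν + k + 1 : ℝ) ≠ 0)
    rw [harg, Complex.Gamma_add_one _ hnz]
    have hfk : ((k.factorial : ℕ) : ℂ) ≠ 0 := by exact_mod_cast Nat.factorial_ne_zero k
    have hgne := gammaC_ne hν1 k
    field_simp
    ring
  have h1 : Summable (fun k => cterm ν s k) := summable_cterm hν s
  have h2 : Summable (fun k => ((ν:ℂ)+1) * cterm (ν+1) s k) :=
    (summable_cterm (by linarith : -(3/4:ℝ) ≤ ν+1) s).mul_left _
  have e1 : ∑' k, (cterm ν s k - ((ν:ℂ)+1) * cterm (ν+1) s k)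
      = Mnu ν s - ((ν:ℂ)+1) * Mnu (ν+1) s := by
    rw [Summable.tsum_sub h1 h2, Mnu_eq_tsum ν s, Mnu_eq_tsum (ν+1) s, tsum_mul_left]
  rw [tsum_congr key, tsum_k_cterm (by linarith : -(3/4:ℝ) ≤ ν+1) s,
    show ν+1+1 = ν+2 by ring] at e1
  linear_combination -e1


lemma Mnu_zero (ν : ℝ) : Mnu ν 0 = 1 / Complex.Gamma ((ν:ℂ) + 1) := by
  rw [Mnu_eq_tsum, tsum_eq_single 0 (fun b hb => by simp [cterm_def, zero_pow hb])]
  simp [cterm_def]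

def MnuR (ν : ℝ) (x : ℝ) : ℝ :=
  ∑' k : ℕ, (-1) ^ k * x ^ k / ((k.factorial : ℝ) * Real.Gamma (ν + k + 1))

lemma Mnu_ofReal (ν : ℝ) (x : ℝ) : Mnu ν (x : ℂ) = ((MnuR ν x : ℝ) : ℂ) := by
  rw [Mnu_eq_tsum, MnuR, Complex.ofReal_tsum]
  apply tsum_congr
  intro k
  rw [cterm_def, gammaC_eq]
  push_cast
  ring


lemma rec1 (s : ℂ) : Mnu (-1/4) s = (3/4 : ℂ) * Mnu (3/4) s - s * Mnu (7/4) s := by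
  have h := Mnu_rec (ν := -1/4) (by norm_num) s
  rw [show (-1/4 : ℝ) + 1 = (3/4:ℝ) by norm_num, show (-1/4 : ℝ) + 2 = (7/4:ℝ) by norm_num] at h
  rw [h]
  norm_num

lemma rec2 (s : ℂ) : Mnu (1/4) s = (5/4 : ℂ) * Mnu (5/4) s - s * Mnu (9/4) s := by
  have h := Mnu_rec (ν := 1/4) (by norm_num) s
  rw [show (1/4 : ℝ) + 1 = (5/4:ℝ) by norm_num, show (1/4 : ℝ) + 2 = (9/4:ℝ) by norm_num] at h
  rw [h]
  norm_num

def argE (ε : ℝ) (z : ℂ) : ℂ := (ε:ℂ)^2 * z^4 / 16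

def Pfun (ε : ℝ) (z : ℂ) : ℂ := -(Mnu (3/4) (argE ε z)) * ((ε:ℂ)^2 * z^3 / 4)

def Qfun (ε : ℝ) (z : ℂ) : ℂ :=
  Mnu (1/4) (argE ε z) - (ε:ℂ)^2 * z^4 / 4 * Mnu (5/4) (argE ε z)

lemma hasDerivAt_argE (ε : ℝ) (z : ℂ) :
    HasDerivAt (argE ε) ((ε:ℂ)^2 * z^3 / 4) z := by
  have h := ((hasDerivAt_pow 4 z).const_mul ((ε:ℂ)^2)).div_const 16
  have he : argE ε = fun w : ℂ => (ε:ℂ)^2 * w^4 / 16 := rfl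
  rw [he]
  refine h.congr_deriv ?_
  push_cast
  ring

lemma hasDerivAt_M14 (ν : ℝ) (hν : -(3/4:ℝ) ≤ ν) (ε : ℝ) (z : ℂ) :
    HasDerivAt (fun w => Mnu ν (argE ε w)) (-Mnu (ν+1) (argE ε z) * ((ε:ℂ)^2 * z^3 / 4)) z := by
  have h := (Mnu_hasDerivAt hν (argE ε z)).comp z (hasDerivAt_argE ε z)
  exact h

lemma hasDerivAt_W1 (ε : ℝ) (z : ℂ) :
    HasDerivAt (fun w => Mnu (-1/4) (argE ε w)) (Pfun ε z) z := by
  have h := hasDerivAt_M14 (-1/4) (by norm_num) ε z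
  rw [show (-1/4:ℝ) + 1 = (3/4:ℝ) by norm_num] at h
  exact h

lemma hasDerivAt_W2 (ε : ℝ) (z : ℂ) :
    HasDerivAt (fun w => w * Mnu (1/4) (argE ε w)) (Qfun ε z) z := by
  have h := (hasDerivAt_id z).mul (hasDerivAt_M14 (1/4) (by norm_num) ε z)
  rw [show (1/4:ℝ) + 1 = (5/4:ℝ) by norm_num] at h
  refine h.congr_deriv ?_
  simp only [Qfun, id_eq]
  ring

lemma hasDerivAt_Pfun (ε : ℝ) (z : ℂ) :
    HasDerivAt (Pfun ε) (-(ε:ℂ)^2 * z^2 * Mnu (-1/4) (argE ε z)) z := by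
  have h1 := hasDerivAt_M14 (3/4) (by norm_num) ε z
  rw [show (3/4:ℝ) + 1 = (7/4:ℝ) by norm_num] at h1
  have h2 := ((hasDerivAt_pow 3 z).const_mul ((ε:ℂ)^2)).div_const 4
  have h := (h1.neg.mul h2)
  have he : Pfun ε = fun w => -(Mnu (3/4) (argE ε w)) * ((ε:ℂ)^2 * w^3 / 4) := rfl
  rw [he]
  refine h.congr_deriv ?_
  rw [rec1 (argE ε z)]
  simp only [argE, id_eq, Pi.neg_apply]
  push_cast
  ring

lemma hasDerivAt_Qfun (ε : ℝ) (z : ℂ) :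
    HasDerivAt (Qfun ε) (-(ε:ℂ)^2 * z^2 * (z * Mnu (1/4) (argE ε z))) z := by
  have h1 := hasDerivAt_M14 (1/4) (by norm_num) ε z
  rw [show (1/4:ℝ) + 1 = (5/4:ℝ) by norm_num] at h1
  have h5 := hasDerivAt_M14 (5/4) (by norm_num) ε z
  rw [show (5/4:ℝ) + 1 = (9/4:ℝ) by norm_num] at h5
  have h2 := ((hasDerivAt_pow 4 z).const_mul ((ε:ℂ)^2)).div_const 4
  have h := h1.sub (h2.mul h5)
  have he : Qfun ε = fun w => Mnu (1/4) (argE ε w) - (ε:ℂ)^2 * w^4 / 4 * Mnu (5/4) (argE ε w) := rfl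
  rw [he]
  refine h.congr_deriv ?_
  rw [rec2 (argE ε z)]
  simp only [argE, id_eq]
  push_cast
  ring


def Dw (ε : ℝ) (κ : ℂ) (z : ℂ) : ℂ :=
  -Pfun ε z + (κ * (Real.sqrt ε : ℂ) / 2) * Qfun ε z

lemma wtilde_eq (ε : ℝ) (κ : ℂ) : wtilde ε κ = fun z =>
    -(Mnu (-1/4) (argE ε z)) + (κ * (Real.sqrt ε : ℂ) / 2) * (z * Mnu (1/4) (argE ε z)) := by
  funext z
  rw [wtilde, argE]
  ring

lemma wtilde_hasDerivAt (ε : ℝ) (κ : ℂ) (z : ℂ) :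
    HasDerivAt (wtilde ε κ) (Dw ε κ z) z := by
  rw [wtilde_eq, Dw]
  exact (hasDerivAt_W1 ε z).neg.add ((hasDerivAt_W2 ε z).const_mul _)

lemma Dw_hasDerivAt (ε : ℝ) (κ : ℂ) (z : ℂ) :
    HasDerivAt (Dw ε κ) (-(ε:ℂ)^2 * z^2 * wtilde ε κ z) z := by
  have h := (hasDerivAt_Pfun ε z).neg.add ((hasDerivAt_Qfun ε z).const_mul
    (κ * (Real.sqrt ε : ℂ) / 2))
  have he : Dw ε κ = fun z => -Pfun ε z + (κ * (Real.sqrt ε : ℂ) / 2) * Qfun ε z := rfl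
  rw [he]
  refine h.congr_deriv ?_
  rw [wtilde_eq]
  ring

lemma deriv_wtilde (ε : ℝ) (κ : ℂ) (z : ℂ) : deriv (wtilde ε κ) z = Dw ε κ z :=
  (wtilde_hasDerivAt ε κ z).deriv

lemma leps_eq (ε : ℝ) (κ : ℂ) (z : ℂ) :
    leps ε κ z = -Complex.I * Dw ε κ z / wtilde ε κ z := by
  rw [leps, deriv_wtilde]


lemma Mnu_zero_ne (ν : ℝ) (hν : -1 < ν) : Mnu ν 0 ≠ 0 := by
  rw [Mnu_zero]
  apply one_div_ne_zero
  rw [show ((ν:ℂ) + 1) = ((ν + 1 : ℝ) : ℂ) by push_cast; ring, Complex.Gamma_ofReal]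
  exact_mod_cast (Real.Gamma_pos_of_pos (by linarith)).ne'

lemma no_common_zero (ε : ℝ) (t : ℝ)
    (h1 : Mnu (-1/4) (argE ε (t:ℂ)) = 0) (h2 : Mnu (1/4) (argE ε (t:ℂ)) = 0) : False := by
  set Wr : ℝ → ℂ := fun r => Mnu (-1/4) (argE ε (r:ℂ)) * Qfun ε (r:ℂ)
    - Pfun ε (r:ℂ) * ((r:ℂ) * Mnu (1/4) (argE ε (r:ℂ))) with hWr
  have hW : ∀ r : ℝ, HasDerivAt Wr 0 r := by
    intro r
    have hu := (hasDerivAt_W1 ε (r:ℂ)).comp_ofReal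
    have hv := (hasDerivAt_W2 ε (r:ℂ)).comp_ofReal
    have hP := (hasDerivAt_Pfun ε (r:ℂ)).comp_ofReal
    have hQ := (hasDerivAt_Qfun ε (r:ℂ)).comp_ofReal
    have h := (hu.mul hQ).sub (hP.mul hv)
    refine h.congr_deriv ?_
    ring
  have hdiff : Differentiable ℝ Wr := fun x => (hW x).differentiableAt
  have hconst : ∀ r : ℝ, Wr r = Wr 0 :=
    fun r => is_const_of_deriv_eq_zero hdiff (fun x => (hW x).deriv) r 0
  have hzero : Wr t = 0 := by
    rw [hWr]
    simp only [h1, h2, zero_mul, mul_zero, sub_zero]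
  have hW0 : Wr 0 ≠ 0 := by
    rw [hWr]
    simp only [Complex.ofReal_zero]
    have hargE0 : argE ε (0:ℂ) = 0 := by simp [argE]
    have hP0 : Pfun ε (0:ℂ) = 0 := by simp [Pfun]
    have hQ0 : Qfun ε (0:ℂ) = Mnu (1/4) 0 := by simp [Qfun, hargE0]
    rw [hargE0, hP0, hQ0]
    simp only [zero_mul, mul_zero, sub_zero]
    exact mul_ne_zero (Mnu_zero_ne _ (by norm_num)) (Mnu_zero_ne _ (by norm_num))
  exact hW0 (hconst t ▸ hzero)

lemma wtilde_ne_zero {ε : ℝ} (hε : 0 < ε) {κ : ℂ}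
    (hκ : κ ∉ Set.range ((↑) : ℝ → ℂ)) (t : ℝ) : wtilde ε κ (t:ℂ) ≠ 0 := by
  intro h0
  set X : ℝ := ε^2 * t^4 / 16 with hX
  have hXc : (ε:ℂ)^2 * (t:ℂ)^4 / 16 = ((X:ℝ):ℂ) := by rw [hX]; push_cast; ring
  set A : ℝ := MnuR (-1/4) X with hA
  set B : ℝ := MnuR (1/4) X with hB
  rw [wtilde, hXc, Mnu_ofReal, Mnu_ofReal, ← hA, ← hB] at h0
  set B' : ℝ := Real.sqrt ε * t / 2 * B with hB'
  have h0' : κ * (B' : ℂ) = (A : ℂ) := by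
    rw [hB']
    push_cast
    linear_combination h0
  by_cases hB0 : B' = 0
  · rw [hB0] at h0'
    have hA0 : A = 0 := by
      have h2 : (A:ℂ) = 0 := by rw [← h0']; simp
      exact_mod_cast h2
    have hAc : Mnu (-1/4) ((X:ℝ):ℂ) = 0 := by rw [Mnu_ofReal, ← hA, hA0]; simp
    by_cases ht : t = 0
    · apply Mnu_zero_ne (-1/4) (by norm_num)
      have hX0 : ((X:ℝ):ℂ) = 0 := by rw [hX, ht]; push_cast; ring
      nth_rewrite 1 [← hX0]
      exact hAc
    · have hs : Real.sqrt ε ≠ 0 := ne_of_gt (Real.sqrt_pos.2 hε)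
      have hB1 : B = 0 := by
        rw [hB'] at hB0
        have hne : Real.sqrt ε * t / 2 ≠ 0 :=
          div_ne_zero (mul_ne_zero hs ht) two_ne_zero
        exact (mul_eq_zero.1 hB0).resolve_left hne
      have hBc : Mnu (1/4) ((X:ℝ):ℂ) = 0 := by rw [Mnu_ofReal, ← hB, hB1]; simp
      have hXarg : ((X:ℝ):ℂ) = argE ε (t:ℂ) := by rw [← hXc]; rfl
      exact no_common_zero ε t (hXarg ▸ hAc) (hXarg ▸ hBc)
  · apply hκ
    refine ⟨A / B', ?_⟩
    have hB'c : ((B':ℝ):ℂ) ≠ 0 := by exact_mod_cast hB0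
    rw [Complex.ofReal_div]
    field_simp
    linear_combination -h0'

end RicAux

/-- For `ε > 0` and non-real `κ`, `t ↦ l_ε(t,κ)` is differentiable on `ℝ` and solves
the Riccati equation `l' + i l² = i ε² t²` there. -/
theorem leps_solves_riccati
    (ε : ℝ) (hε : 0 < ε) (κ : ℂ) (hκ : κ ∉ Set.range ((↑) : ℝ → ℂ)) :
    ∀ t : ℝ, HasDerivAt (fun u : ℝ => leps ε κ (u : ℂ))
      (Complex.I * (ε : ℂ) ^ 2 * (t : ℂ) ^ 2 - Complex.I * (leps ε κ (t : ℂ)) ^ 2) t := by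
  intro t
  have hw := RicAux.wtilde_ne_zero hε hκ t
  have hfun : (fun u : ℝ => leps ε κ (u:ℂ))
      = fun u : ℝ => -Complex.I * RicAux.Dw ε κ (u:ℂ) / wtilde ε κ (u:ℂ) :=
    funext fun u => RicAux.leps_eq ε κ _
  rw [hfun]
  have hN : HasDerivAt (fun u : ℝ => -Complex.I * RicAux.Dw ε κ (u:ℂ))
      (-Complex.I * (-(ε:ℂ)^2 * (t:ℂ)^2 * wtilde ε κ (t:ℂ))) t :=
    ((RicAux.Dw_hasDerivAt ε κ (t:ℂ)).comp_ofReal).const_mul _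
  have hD : HasDerivAt (fun u : ℝ => wtilde ε κ (u:ℂ)) (RicAux.Dw ε κ (t:ℂ)) t :=
    (RicAux.wtilde_hasDerivAt ε κ _).comp_ofReal
  have h := hN.div hD hw
  refine h.congr_deriv ?_
  rw [RicAux.leps_eq]
  have hsq : (-Complex.I * RicAux.Dw ε κ (t:ℂ))^2 = -(RicAux.Dw ε κ (t:ℂ)^2) := by
    rw [mul_pow, neg_sq, Complex.I_sq]
    ring
  rw [div_pow, hsq]
  field_simp


end
end

section
/- Fix κ ∈ ℂ with κ ∉ ℝ and set a = 2κ·Γ(3/4)/Γ(1/4). There exist constants δ > 0 and C > 0 such that for all ε ∈ (0,1) and all t ∈ ℝ with ε^{1/2}·|t| ≤ δ, one has w̃_ε(t,κ) ≠ 0 and |l_ε(t,κ) − i·a·ε^{1/2}·(1 + a·ε^{1/2}·t + (a·ε^{1/2}·t)²)| ≤ C·ε^{1/2}·(ε^{1/2}·|t|)³. -/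
open Complex MeasureTheory Set

noncomputable section

/-- `a = 2κ·Γ(3/4)/Γ(1/4)`. -/
def aconst (κ : ℂ) : ℂ := 2 * κ * (Real.Gamma (3/4) : ℂ) / (Real.Gamma (1/4) : ℂ)

namespace Aux

def cf (ν : ℝ) (k : ℕ) : ℂ :=
  (-1) ^ k / ((k.factorial : ℂ) * Complex.Gamma ((ν : ℂ) + (k : ℂ) + 1))

lemma Mnu_eq (ν : ℝ) (s : ℂ) : Mnu ν s = ∑' k, cf ν k * s ^ k := by
  unfold Mnu cf
  congr 1; ext k; ring

lemma gammaArg (ν : ℝ) (k : ℕ) : (ν : ℂ) + (k : ℂ) + 1 = ((ν + k + 1 : ℝ) : ℂ) := by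
  push_cast; ring

lemma gamma_pos (ν : ℝ) (hν : -1 < ν) (k : ℕ) : 0 < Real.Gamma (ν + k + 1) := by
  apply Real.Gamma_pos_of_pos
  have : (0:ℝ) ≤ k := Nat.cast_nonneg k
  linarith

lemma gamma_ge (x : ℝ) (hx : 3/4 ≤ x) : ∀ k : ℕ, Real.Gamma x * (3/4)^k ≤ Real.Gamma (x + k) := by
  intro k
  induction k with
  | zero => simp
  | succ k ih =>
    have hxk : (3/4:ℝ) ≤ x + k := by
      have : (0:ℝ) ≤ k := Nat.cast_nonneg k
      linarith
    have h1 : Real.Gamma (x + (k+1:ℕ)) = (x+k) * Real.Gamma (x+k) := by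
      push_cast
      rw [show x + (k+1:ℝ) = (x + k) + 1 by ring, Real.Gamma_add_one (by linarith)]
    rw [h1]
    have hG : 0 < Real.Gamma (x + k) := Real.Gamma_pos_of_pos (by linarith)
    calc Real.Gamma x * (3/4)^(k+1) = (3/4) * (Real.Gamma x * (3/4)^k) := by ring
    _ ≤ (3/4) * Real.Gamma (x+k) := by nlinarith
    _ ≤ (x+k) * Real.Gamma (x+k) := by nlinarith

lemma norm_cf (ν : ℝ) (hν : -1 < ν) (k : ℕ) :
    ‖cf ν k‖ = 1 / (k.factorial * Real.Gamma (ν + k + 1)) := by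
  rw [cf, gammaArg, Complex.Gamma_ofReal]
  rw [norm_div, norm_pow, norm_neg, norm_one, one_pow]
  rw [show ((k.factorial:ℂ) * ((Real.Gamma (ν+k+1) : ℝ):ℂ)) = (((k.factorial * Real.Gamma (ν+k+1) : ℝ)):ℂ) by push_cast; ring]
  rw [Complex.norm_real, Real.norm_eq_abs, abs_of_pos (by have := gamma_pos ν hν k; positivity)]

lemma norm_cf_le (ν : ℝ) (hν : -1/4 ≤ ν) (k : ℕ) :
    ‖cf ν k‖ ≤ (4/3)^k / (k.factorial * Real.Gamma (ν+1)) := by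
  rw [norm_cf ν (by linarith) k]
  have hg := gamma_ge (ν+1) (by linarith) k
  rw [show ν + 1 + k = ν + k + 1 by ring] at hg
  have hG1 : 0 < Real.Gamma (ν+1) := Real.Gamma_pos_of_pos (by linarith)
  have hGk : 0 < Real.Gamma (ν+k+1) := gamma_pos ν (by linarith) k
  have hf : (0:ℝ) < k.factorial := by positivity
  rw [div_le_div_iff₀ (by positivity) (by positivity), one_mul]
  have hpow : (4/3:ℝ)^k * (3/4)^k = 1 := by rw [← mul_pow]; norm_num
  calc (↑k.factorial : ℝ) * Real.Gamma (ν+1)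
      = ↑k.factorial * (((4/3:ℝ)^k * (3/4)^k) * Real.Gamma (ν+1)) := by rw [hpow]; ring
    _ = (4/3)^k * (↑k.factorial * (Real.Gamma (ν+1) * (3/4)^k)) := by ring
    _ ≤ (4/3)^k * (↑k.factorial * Real.Gamma (ν+k+1)) := by
        apply mul_le_mul_of_nonneg_left _ (by positivity)
        exact mul_le_mul_of_nonneg_left hg hf.le


def Bc : ℝ := ∑' k : ℕ, (4/3:ℝ)^k / (k.factorial : ℝ)

lemma summable_Bc : Summable (fun k : ℕ => (4/3:ℝ)^k / (k.factorial : ℝ)) := by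
  simpa [div_eq_mul_inv] using Real.summable_pow_div_factorial (4/3)

lemma Bc_nonneg : 0 ≤ Bc := tsum_nonneg (fun k => by positivity)

lemma summable_bound (ν : ℝ) (hν : -1/4 ≤ ν) :
    Summable (fun k : ℕ => (4/3:ℝ)^k / (k.factorial * Real.Gamma (ν+1))) := by
  have : (fun k : ℕ => (4/3:ℝ)^k / (k.factorial * Real.Gamma (ν+1)))
      = fun k : ℕ => ((4/3:ℝ)^k / k.factorial) * (1 / Real.Gamma (ν+1)) := by
    ext k; field_simp
  rw [this]
  exact summable_Bc.mul_right _

lemma summable_Mnu (ν : ℝ) (hν : -1/4 ≤ ν) (s : ℂ) (hs : ‖s‖ ≤ 1) :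
    Summable (fun k : ℕ => cf ν k * s ^ k) := by
  apply Summable.of_norm
  apply Summable.of_nonneg_of_le (fun k => norm_nonneg _) _ (summable_bound ν hν)
  intro k
  rw [norm_mul, norm_pow]
  calc ‖cf ν k‖ * ‖s‖^k ≤ ((4/3)^k / (k.factorial * Real.Gamma (ν+1))) * 1 := by
        have hG1 : 0 < Real.Gamma (ν+1) := Real.Gamma_pos_of_pos (by linarith)
        apply mul_le_mul (norm_cf_le ν hν k) (pow_le_one₀ (norm_nonneg _) hs)
          (by positivity) (by positivity)
  _ = (4/3)^k / (k.factorial * Real.Gamma (ν+1)) := mul_one _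

lemma hasSum_Mnu (ν : ℝ) (hν : -1/4 ≤ ν) (s : ℂ) (hs : ‖s‖ ≤ 1) :
    HasSum (fun k : ℕ => cf ν k * s ^ k) (Mnu ν s) := by
  rw [Mnu_eq]
  exact (summable_Mnu ν hν s hs).hasSum

lemma norm_term_le (ν : ℝ) (hν : -1/4 ≤ ν) (s : ℂ) (hs : ‖s‖ ≤ 1) (k : ℕ) :
    ‖cf ν k * s ^ k‖ ≤ (4/3)^k / (k.factorial * Real.Gamma (ν+1)) := by
  rw [norm_mul, norm_pow]
  have hG1 : 0 < Real.Gamma (ν+1) := Real.Gamma_pos_of_pos (by linarith)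
  calc ‖cf ν k‖ * ‖s‖^k ≤ ((4/3)^k / (k.factorial * Real.Gamma (ν+1))) * 1 :=
        mul_le_mul (norm_cf_le ν hν k) (pow_le_one₀ (norm_nonneg _) hs)
          (by positivity) (by positivity)
  _ = _ := mul_one _

lemma norm_Mnu_le (ν : ℝ) (hν : -1/4 ≤ ν) (s : ℂ) (hs : ‖s‖ ≤ 1) :
    ‖Mnu ν s‖ ≤ Bc / Real.Gamma (ν+1) := by
  rw [Mnu_eq]
  have h1 : ‖∑' k : ℕ, cf ν k * s ^ k‖ ≤ ∑' k : ℕ, (4/3:ℝ)^k / (k.factorial * Real.Gamma (ν+1)) :=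
    tsum_of_norm_bounded (summable_bound ν hν).hasSum (norm_term_le ν hν s hs)
  refine h1.trans (le_of_eq ?_)
  rw [Bc, ← tsum_div_const]
  congr 1; ext k
  have hG1 : 0 < Real.Gamma (ν+1) := Real.Gamma_pos_of_pos (by linarith)
  have hf : (0:ℝ) < k.factorial := by positivity
  field_simp

lemma Mnu_tail (ν : ℝ) (hν : -1/4 ≤ ν) (s : ℂ) (hs : ‖s‖ ≤ 1) :
    ‖Mnu ν s - 1 / ((Real.Gamma (ν+1) : ℝ) : ℂ)‖ ≤ (4/3) * Bc / Real.Gamma (ν+1) * ‖s‖ := by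
  have hsum := summable_Mnu ν hν s hs
  have h0 : cf ν 0 * s ^ 0 = 1 / ((Real.Gamma (ν+1) : ℝ) : ℂ) := by
    rw [cf]
    norm_num
    rw [show (ν:ℂ) + 1 = ((ν + 1 : ℝ):ℂ) by push_cast; ring, Complex.Gamma_ofReal]
  have hsplit : Mnu ν s = cf ν 0 * s ^ 0 + ∑' k : ℕ, cf ν (k+1) * s ^ (k+1) := by
    rw [Mnu_eq]
    exact hsum.tsum_eq_zero_add
  have hsub : Mnu ν s - 1 / ((Real.Gamma (ν+1) : ℝ) : ℂ) = ∑' k : ℕ, cf ν (k+1) * s ^ (k+1) := by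
    rw [hsplit, h0]; ring
  rw [hsub]
  have hG1 : 0 < Real.Gamma (ν+1) := Real.Gamma_pos_of_pos (by linarith)
  have hb : ∀ k : ℕ, ‖cf ν (k+1) * s ^ (k+1)‖ ≤ ((4/3) * ((4/3:ℝ)^k / k.factorial) / Real.Gamma (ν+1)) * ‖s‖ := by
    intro k
    rw [norm_mul, norm_pow, pow_succ]
    have h1 : ‖cf ν (k+1)‖ ≤ (4/3)^(k+1) / ((k+1).factorial * Real.Gamma (ν+1)) := norm_cf_le ν hν (k+1)
    have h2 : ‖s‖^k ≤ 1 := pow_le_one₀ (norm_nonneg _) hs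
    have hfk : (k.factorial : ℝ) ≤ ((k+1).factorial : ℝ) := by
      exact_mod_cast Nat.factorial_le (Nat.le_succ k)
    have hf : (0:ℝ) < k.factorial := by positivity
    have h3 : ((4/3:ℝ))^(k+1) / ((k+1).factorial * Real.Gamma (ν+1)) ≤ (4/3) * ((4/3:ℝ)^k / k.factorial) / Real.Gamma (ν+1) := by
      have e : (4/3:ℝ)^(k+1) / (k.factorial * Real.Gamma (ν+1)) = 4/3 * ((4/3:ℝ)^k / k.factorial) / Real.Gamma (ν+1) := by
        rw [pow_succ]; field_simp
      rw [← e]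
      exact div_le_div_of_nonneg_left (by positivity) (by positivity)
        (mul_le_mul_of_nonneg_right hfk hG1.le)
    calc ‖cf ν (k+1)‖ * (‖s‖^k * ‖s‖)
        ≤ ((4/3:ℝ))^(k+1) / ((k+1).factorial * Real.Gamma (ν+1)) * (1 * ‖s‖) := by
          apply mul_le_mul h1 _ (by positivity) (by positivity)
          exact mul_le_mul_of_nonneg_right h2 (norm_nonneg _)
      _ = ((4/3:ℝ))^(k+1) / ((k+1).factorial * Real.Gamma (ν+1)) * ‖s‖ := by rw [one_mul]
      _ ≤ ((4/3) * ((4/3:ℝ)^k / k.factorial) / Real.Gamma (ν+1)) * ‖s‖ :=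
          mul_le_mul_of_nonneg_right h3 (norm_nonneg _)
  have hsummable : Summable (fun k : ℕ => ((4/3) * ((4/3:ℝ)^k / k.factorial) / Real.Gamma (ν+1)) * ‖s‖) := by
    apply Summable.mul_right
    apply Summable.div_const
    exact summable_Bc.mul_left _
  calc ‖∑' k : ℕ, cf ν (k+1) * s ^ (k+1)‖
      ≤ ∑' k : ℕ, ((4/3) * ((4/3:ℝ)^k / k.factorial) / Real.Gamma (ν+1)) * ‖s‖ :=
        tsum_of_norm_bounded hsummable.hasSum hb
    _ = (4/3) * Bc / Real.Gamma (ν+1) * ‖s‖ := by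
        rw [tsum_mul_right, tsum_div_const, tsum_mul_left, Bc]


lemma cf_succ_mul (ν : ℝ) (hν : -1/4 ≤ ν) (k : ℕ) :
    cf ν (k+1) * ((k:ℂ)+1) = -(cf (ν+1) k) := by
  have harg : ((ν+1:ℝ):ℂ) + (k:ℂ) + 1 = (ν:ℂ) + ((k+1:ℕ):ℂ) + 1 := by push_cast; ring
  rw [cf, cf, harg]
  have hG : Complex.Gamma ((ν:ℂ) + ((k+1:ℕ):ℂ) + 1) ≠ 0 := by
    rw [gammaArg]
    rw [Complex.Gamma_ofReal]
    exact_mod_cast (gamma_pos ν (by linarith) (k+1)).ne'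
  have hf1 : ((k+1).factorial : ℂ) = ((k:ℂ)+1) * (k.factorial : ℂ) := by
    rw [Nat.factorial_succ]; push_cast; ring
  have hfk : (k.factorial : ℂ) ≠ 0 := by exact_mod_cast (Nat.factorial_pos k).ne'
  have hk1 : ((k:ℂ)+1) ≠ 0 := by
    exact_mod_cast (Nat.cast_add_one_ne_zero k : ((k:ℂ)+1) ≠ 0)
  rw [hf1, pow_succ, ← neg_div, div_mul_eq_mul_div, div_eq_div_iff (by
      exact mul_ne_zero (mul_ne_zero hk1 hfk) hG) (mul_ne_zero hfk hG)]
  ring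

lemma hasDerivAt_Mnu (ν : ℝ) (hν : -1/4 ≤ ν) (s : ℂ) :
    HasDerivAt (Mnu ν) (-(Mnu (ν+1) s)) s := by
  set R : ℝ := ‖s‖ + 1 with hR
  have hR1 : 1 ≤ R := by rw [hR]; linarith [norm_nonneg s]
  have hG1 : 0 < Real.Gamma (ν+1) := Real.Gamma_pos_of_pos (by linarith)
  set u : ℕ → ℝ := fun k => (8*R/3)^k / k.factorial * (1 / Real.Gamma (ν+1)) with hu_def
  have hu : Summable u := by
    apply Summable.mul_right
    simpa [div_eq_mul_inv] using Real.summable_pow_div_factorial (8*R/3)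
  have hball : s ∈ Metric.ball (0:ℂ) R := by
    simp [hR]
  have hderiv : ∀ (k : ℕ) (y : ℂ), y ∈ Metric.ball (0:ℂ) R →
      HasDerivAt (fun z => cf ν k * z ^ k) (cf ν k * ((k:ℂ) * y ^ (k-1))) y := by
    intro k y _
    exact (hasDerivAt_pow k y).const_mul (cf ν k)
  have hbound : ∀ (k : ℕ) (y : ℂ), y ∈ Metric.ball (0:ℂ) R →
      ‖cf ν k * ((k:ℂ) * y ^ (k-1))‖ ≤ u k := by
    intro k y hy
    have hyR : ‖y‖ ≤ R := by
      rw [Metric.mem_ball, dist_zero_right] at hy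
      exact hy.le
    rw [norm_mul, norm_mul, norm_pow, Complex.norm_natCast]
    have h1 : ‖cf ν k‖ ≤ (4/3)^k / (k.factorial * Real.Gamma (ν+1)) := norm_cf_le ν hν k
    have h2 : ‖y‖^(k-1) ≤ R^k := by
      calc ‖y‖^(k-1) ≤ R^(k-1) := pow_le_pow_left₀ (norm_nonneg _) hyR _
      _ ≤ R^k := pow_le_pow_right₀ hR1 (Nat.sub_le k 1)
    have h3 : (k:ℝ) ≤ 2^k := by exact_mod_cast (Nat.lt_two_pow_self (n := k)).le
    calc ‖cf ν k‖ * ((k:ℝ) * ‖y‖^(k-1))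
        ≤ ((4/3)^k / (k.factorial * Real.Gamma (ν+1))) * (2^k * R^k) := by
          apply mul_le_mul h1 _ (by positivity) (by positivity)
          exact mul_le_mul h3 h2 (by positivity) (by positivity)
      _ = (8*R/3)^k / k.factorial * (1 / Real.Gamma (ν+1)) := by
          rw [show (8*R/3:ℝ) = (4/3) * 2 * R by ring, mul_pow, mul_pow]
          field_simp
  have hsum0 : Summable (fun k => cf ν k * s ^ k) := by
    apply Summable.of_norm
    apply Summable.of_nonneg_of_le (fun k => norm_nonneg _) _ hu
    intro k
    rw [norm_mul, norm_pow]
    have h1 : ‖cf ν k‖ ≤ (4/3)^k / (k.factorial * Real.Gamma (ν+1)) := norm_cf_le ν hν k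
    have h2 : ‖s‖^k ≤ R^k := pow_le_pow_left₀ (norm_nonneg _) (by simp [hR]) _
    calc ‖cf ν k‖ * ‖s‖^k ≤ ((4/3)^k / (k.factorial * Real.Gamma (ν+1))) * R^k := by
          apply mul_le_mul h1 h2 (by positivity) (by positivity)
      _ ≤ (8*R/3)^k / k.factorial * (1 / Real.Gamma (ν+1)) := by
          have e : (8*R/3:ℝ)^k / k.factorial * (1/Real.Gamma (ν+1))
              = (2:ℝ)^k * ((4/3)^k / (k.factorial * Real.Gamma (ν+1)) * R^k) := by
            rw [show (8*R/3:ℝ) = (4/3)*2*R by ring, mul_pow, mul_pow]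
            field_simp
          rw [e]
          refine le_mul_of_one_le_left ?_ (one_le_pow₀ (by norm_num))
          exact mul_nonneg (div_nonneg (by positivity) (mul_nonneg (by positivity) hG1.le)) (by positivity)
  have key := hasDerivAt_tsum_of_isPreconnected hu Metric.isOpen_ball
    (convex_ball (0:ℂ) R).isPreconnected
    hderiv hbound hball hsum0 hball
  have hfun : (fun z => ∑' k : ℕ, cf ν k * z ^ k) = Mnu ν := by
    ext z; rw [Mnu_eq]
  rw [hfun] at key
  have hsum' : ∑' k : ℕ, cf ν k * ((k:ℂ) * s ^ (k-1)) = -(Mnu (ν+1) s) := by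
    have hsummable' : Summable (fun k : ℕ => cf ν k * ((k:ℂ) * s ^ (k-1))) := by
      apply Summable.of_norm
      exact Summable.of_nonneg_of_le (fun k => norm_nonneg _) (fun k => hbound k s hball) hu
    rw [hsummable'.tsum_eq_zero_add]
    simp only [Nat.cast_zero, zero_mul, mul_zero, zero_add]
    have : ∀ k : ℕ, cf ν (k+1) * (((k+1:ℕ):ℂ) * s ^ ((k+1)-1)) = -(cf (ν+1) k * s ^ k) := by
      intro k
      have h := cf_succ_mul ν hν k
      have : (((k+1:ℕ)):ℂ) = (k:ℂ)+1 := by push_cast; ring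
      rw [this, Nat.add_sub_cancel]
      calc cf ν (k+1) * (((k:ℂ)+1) * s ^ k) = (cf ν (k+1) * ((k:ℂ)+1)) * s^k := by ring
      _ = -(cf (ν+1) k) * s^k := by rw [h]
      _ = -(cf (ν+1) k * s ^ k) := by ring
    rw [tsum_congr this, tsum_neg, Mnu_eq]
  rw [hsum'] at key
  exact key




lemma wtilde_hasDerivAt (ε : ℝ) (κ : ℂ) (t : ℂ) :
    HasDerivAt (wtilde ε κ)
      (Mnu (3/4) ((ε:ℂ)^2*t^4/16) * ((ε:ℂ)^2*t^3/4)
        + (κ * (Real.sqrt ε:ℂ) / 2 * Mnu (1/4) ((ε:ℂ)^2*t^4/16)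
           - κ * (Real.sqrt ε:ℂ) * t / 2 * (Mnu (5/4) ((ε:ℂ)^2*t^4/16) * ((ε:ℂ)^2*t^3/4)))) t := by
  have hφ : HasDerivAt (fun y : ℂ => (ε:ℂ)^2*y^4/16) ((ε:ℂ)^2*(((4:ℕ):ℂ)*t^3)/16) t :=
    ((hasDerivAt_pow 4 t).const_mul ((ε:ℂ)^2)).div_const 16
  have hM1 : HasDerivAt (fun y : ℂ => Mnu (-1/4) ((ε:ℂ)^2*y^4/16))
      (-(Mnu (-1/4+1) ((ε:ℂ)^2*t^4/16)) * ((ε:ℂ)^2*(((4:ℕ):ℂ)*t^3)/16)) t :=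
    (hasDerivAt_Mnu (-1/4) (le_refl _) _).comp t hφ
  have hM2 : HasDerivAt (fun y : ℂ => Mnu (1/4) ((ε:ℂ)^2*y^4/16))
      (-(Mnu (1/4+1) ((ε:ℂ)^2*t^4/16)) * ((ε:ℂ)^2*(((4:ℕ):ℂ)*t^3)/16)) t :=
    (hasDerivAt_Mnu (1/4) (by norm_num) _).comp t hφ
  have hlin : HasDerivAt (fun y : ℂ => κ * (Real.sqrt ε:ℂ) * y / 2) (κ * (Real.sqrt ε:ℂ) / 2) t := by
    have h := ((hasDerivAt_id t).const_mul (κ * (Real.sqrt ε:ℂ))).div_const 2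
    simpa [mul_one] using h
  have htot := (hM1.neg).add (hlin.mul hM2)
  have e34 : (-1/4+1 : ℝ) = 3/4 := by norm_num
  have e54 : (1/4+1 : ℝ) = 5/4 := by norm_num
  rw [e34] at htot
  rw [e54] at htot
  refine HasDerivAt.congr_deriv (f := wtilde ε κ) htot ?_
  push_cast
  ring

lemma deriv_wtilde (ε : ℝ) (κ : ℂ) (t : ℂ) :
    deriv (wtilde ε κ) t
      = Mnu (3/4) ((ε:ℂ)^2*t^4/16) * ((ε:ℂ)^2*t^3/4)
        + (κ * (Real.sqrt ε:ℂ) / 2 * Mnu (1/4) ((ε:ℂ)^2*t^4/16)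
           - κ * (Real.sqrt ε:ℂ) * t / 2 * (Mnu (5/4) ((ε:ℂ)^2*t^4/16) * ((ε:ℂ)^2*t^3/4))) :=
  (wtilde_hasDerivAt ε κ t).deriv

end Aux

set_option maxHeartbeats 1000000 in
open Aux in
/-- Small-time expansion of `l_ε(t,κ)`, uniform in `ε ∈ (0,1)`:
`l_ε(t,κ) = i a ε^{1/2}(1 + a ε^{1/2} t + (a ε^{1/2} t)²) + O(ε^{1/2}(ε^{1/2}|t|)³)`. -/
theorem leps_expansion_at_zero (κ : ℂ) (hκ : κ ∉ Set.range ((↑) : ℝ → ℂ)) :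
    ∃ δ > (0 : ℝ), ∃ C > (0 : ℝ), ∀ ε : ℝ, ε ∈ Set.Ioo (0 : ℝ) 1 → ∀ t : ℝ,
      Real.sqrt ε * |t| ≤ δ →
      wtilde ε κ (t : ℂ) ≠ 0 ∧
      ‖leps ε κ (t : ℂ) - Complex.I * aconst κ * (Real.sqrt ε : ℂ)
          * (1 + aconst κ * (Real.sqrt ε : ℂ) * (t : ℂ)
              + (aconst κ * (Real.sqrt ε : ℂ) * (t : ℂ)) ^ 2)‖
        ≤ C * Real.sqrt ε * (Real.sqrt ε * |t|) ^ 3 := by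
  have hγ34 : 0 < Real.Gamma (3/4) := Real.Gamma_pos_of_pos (by norm_num)
  have hγ14 : 0 < Real.Gamma (1/4) := Real.Gamma_pos_of_pos (by norm_num)
  have hγ54 : 0 < Real.Gamma (5/4) := Real.Gamma_pos_of_pos (by norm_num)
  have hγ74 : 0 < Real.Gamma (3/4+1) := Real.Gamma_pos_of_pos (by norm_num)
  have hγ94 : 0 < Real.Gamma (5/4+1) := Real.Gamma_pos_of_pos (by norm_num)
  have hγrel : Real.Gamma (5/4) = (1/4) * Real.Gamma (1/4) := by
    rw [show (5/4:ℝ) = 1/4 + 1 by norm_num, Real.Gamma_add_one (by norm_num)]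
  have hBc0 : (0:ℝ) ≤ Bc := Bc_nonneg
  obtain ⟨A, hA⟩ : ∃ x : ℂ, x = aconst κ := ⟨_, rfl⟩
  rw [show aconst κ = A from hA.symm]
  obtain ⟨c₀, hc₀⟩ : ∃ x : ℂ, x = -(1/((Real.Gamma (3/4) : ℝ):ℂ)) := ⟨_, rfl⟩
  obtain ⟨c₁, hc₁⟩ : ∃ x : ℂ, x = κ / (2*((Real.Gamma (5/4) : ℝ):ℂ)) := ⟨_, rfl⟩
  have h34C : ((Real.Gamma (3/4):ℝ):ℂ) ≠ 0 := by exact_mod_cast hγ34.ne'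
  have h14C : ((Real.Gamma (1/4):ℝ):ℂ) ≠ 0 := by exact_mod_cast hγ14.ne'
  have h54C : ((Real.Gamma (5/4):ℝ):ℂ) ≠ 0 := by exact_mod_cast hγ54.ne'
  have hrelC : ((Real.Gamma (5/4):ℝ):ℂ) = (1/4) * ((Real.Gamma (1/4):ℝ):ℂ) := by
    rw [hγrel]; push_cast; ring
  have hAc₀ : A * c₀ = -c₁ := by
    rw [hA, hc₀, hc₁, aconst, hrelC]
    field_simp
    ring
  obtain ⟨T1, hT1d⟩ : ∃ x : ℝ, x = 4/3*Bc/Real.Gamma (3/4) := ⟨_, rfl⟩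
  obtain ⟨T2, hT2d⟩ : ∃ x : ℝ, x = 4/3*Bc/Real.Gamma (5/4) := ⟨_, rfl⟩
  obtain ⟨B3, hB3d⟩ : ∃ x : ℝ, x = Bc/Real.Gamma (3/4+1) := ⟨_, rfl⟩
  obtain ⟨B5, hB5d⟩ : ∃ x : ℝ, x = Bc/Real.Gamma (5/4+1) := ⟨_, rfl⟩
  have hT1 : 0 ≤ T1 := by rw [hT1d]; exact div_nonneg (by linarith) hγ34.le
  have hT2 : 0 ≤ T2 := by rw [hT2d]; exact div_nonneg (by linarith) hγ54.le
  have hB3 : 0 ≤ B3 := by rw [hB3d]; exact div_nonneg hBc0 hγ74.le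
  have hB5 : 0 ≤ B5 := by rw [hB5d]; exact div_nonneg hBc0 hγ94.le
  obtain ⟨KF, hKFd⟩ : ∃ x : ℝ, x = T1 + ‖κ‖/2 * T2 := ⟨_, rfl⟩
  obtain ⟨KG, hKGd⟩ : ∃ x : ℝ, x = B3/4 + ‖κ‖/2 * T2 + ‖κ‖/8 * B5 := ⟨_, rfl⟩
  have hKF0 : 0 ≤ KF := by
    rw [hKFd]
    have : 0 ≤ ‖κ‖/2 * T2 := mul_nonneg (by positivity) hT2
    linarith
  have hKG0 : 0 ≤ KG := by
    rw [hKGd]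
    have h1 : 0 ≤ ‖κ‖/2 * T2 := mul_nonneg (by positivity) hT2
    have h2 : 0 ≤ ‖κ‖/8 * B5 := mul_nonneg (by positivity) hB5
    linarith
  obtain ⟨CH, hCHd⟩ : ∃ x : ℝ, x = KG + ‖A‖^3*‖c₁‖ + ‖A‖*(1+‖A‖+‖A‖^2)*KF := ⟨_, rfl⟩
  have hCH0 : 0 ≤ CH := by
    rw [hCHd]
    have h1 : 0 ≤ ‖A‖^3*‖c₁‖ := mul_nonneg (by positivity) (norm_nonneg _)
    have h2 : 0 ≤ ‖A‖*(1+‖A‖+‖A‖^2)*KF :=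
      mul_nonneg (mul_nonneg (norm_nonneg _) (by positivity)) hKF0
    linarith
  obtain ⟨δ, hδd⟩ : ∃ x : ℝ, x = min 1 ((1/Real.Gamma (3/4)) / (2*(‖c₁‖ + KF + 1))) := ⟨_, rfl⟩
  have hδpos : 0 < δ := by
    rw [hδd]
    apply lt_min one_pos
    apply div_pos (div_pos one_pos hγ34)
    have : (0:ℝ) ≤ ‖c₁‖ := norm_nonneg _
    linarith
  obtain ⟨C, hCd⟩ : ∃ x : ℝ, x = 2*Real.Gamma (3/4)*CH + 1 := ⟨_, rfl⟩
  have hCpos : 0 < C := by rw [hCd]; nlinarith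
  refine ⟨δ, hδpos, C, hCpos, ?_⟩
  rintro ε ⟨hε0, hε1⟩ t ht
  have hsε : 0 < Real.sqrt ε := Real.sqrt_pos.mpr hε0
  obtain ⟨u, hu_def⟩ : ∃ x : ℝ, x = Real.sqrt ε * t := ⟨_, rfl⟩
  have habsu : |u| = Real.sqrt ε * |t| := by rw [hu_def, abs_mul, abs_of_pos hsε]
  have hau : 0 ≤ |u| := abs_nonneg u
  have huδ : |u| ≤ δ := by rw [habsu]; exact ht
  have hu1 : |u| ≤ 1 := huδ.trans (le_of_eq_of_le hδd (min_le_left _ _))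
  have hu2 : |u| ≤ (1/Real.Gamma (3/4)) / (2*(‖c₁‖ + KF + 1)) :=
    huδ.trans (le_of_eq_of_le hδd (min_le_right _ _))
  have hsq : Real.sqrt ε ^ 2 = ε := Real.sq_sqrt hε0.le
  obtain ⟨S, hS⟩ : ∃ x : ℂ, x = ((Real.sqrt ε : ℝ) : ℂ) := ⟨_, rfl⟩
  rw [show ((Real.sqrt ε : ℝ) : ℂ) = S from hS.symm]
  have hSsq : S^2 = (ε:ℂ) := by rw [hS]; exact_mod_cast congrArg Complex.ofReal hsq
  have huc : ((u:ℝ):ℂ) = S * (t:ℂ) := by rw [hu_def, hS]; push_cast; ring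
  obtain ⟨sc, hsc⟩ : ∃ x : ℂ, x = (ε:ℂ)^2*(t:ℂ)^4/16 := ⟨_, rfl⟩
  have hsc_u : sc = ((u:ℝ):ℂ)^4/16 := by rw [hsc, huc, ← hSsq]; ring
  have hnsc : ‖sc‖ = |u|^4/16 := by
    rw [hsc_u, norm_div, norm_pow, Complex.norm_real, Real.norm_eq_abs]
    norm_num
  have hsc1 : ‖sc‖ ≤ 1 := by
    rw [hnsc]
    have : |u|^4 ≤ 1 := pow_le_one₀ hau hu1
    linarith
  have hsc3 : ‖sc‖ ≤ |u|^3 := by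
    rw [hnsc]
    have h1 : |u|^4 ≤ |u|^3 := pow_le_pow_of_le_one hau hu1 (by norm_num)
    have h2 : 0 ≤ |u|^3 := by positivity
    linarith
  -- Mnu bounds
  have tail1 := Mnu_tail (-1/4) (le_refl _) sc hsc1
  rw [show (-1/4+1:ℝ) = 3/4 by norm_num] at tail1
  have tail2 := Mnu_tail (1/4) (by norm_num) sc hsc1
  rw [show (1/4+1:ℝ) = 5/4 by norm_num] at tail2
  have bound3 := norm_Mnu_le (3/4) (by norm_num) sc hsc1
  have bound5 := norm_Mnu_le (5/4) (by norm_num) sc hsc1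
  rw [← hT1d] at tail1
  rw [← hT2d] at tail2
  rw [← hB3d] at bound3
  rw [← hB5d] at bound5
  -- F decomposition
  have hFdef : wtilde ε κ (t:ℂ) = -Mnu (-1/4) sc + κ * S * (t:ℂ)/2 * Mnu (1/4) sc := by
    rw [hsc, hS]; rfl
  have hEFeq : wtilde ε κ (t:ℂ) - c₀ - c₁*((u:ℝ):ℂ)
      = -(Mnu (-1/4) sc - 1/((Real.Gamma (3/4):ℝ):ℂ))
        + (κ * ((u:ℝ):ℂ)/2) * (Mnu (1/4) sc - 1/((Real.Gamma (5/4):ℝ):ℂ)) := by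
    rw [hFdef, hc₀, hc₁, huc]
    field_simp
    ring
  have hnormk : ∀ (z : ℂ) (Y : ℂ), ‖κ * z / 2 * Y‖ = ‖κ‖ * ‖z‖ / 2 * ‖Y‖ := by
    intro z Y
    rw [norm_mul, norm_div, norm_mul]
    norm_num
  have hEF3 : ‖wtilde ε κ (t:ℂ) - c₀ - c₁*((u:ℝ):ℂ)‖ ≤ KF * |u|^3 := by
    rw [hEFeq]
    calc ‖-(Mnu (-1/4) sc - 1/((Real.Gamma (3/4):ℝ):ℂ))
            + (κ * ((u:ℝ):ℂ)/2) * (Mnu (1/4) sc - 1/((Real.Gamma (5/4):ℝ):ℂ))‖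
        ≤ ‖-(Mnu (-1/4) sc - 1/((Real.Gamma (3/4):ℝ):ℂ))‖
          + ‖(κ * ((u:ℝ):ℂ)/2) * (Mnu (1/4) sc - 1/((Real.Gamma (5/4):ℝ):ℂ))‖ := norm_add_le _ _
      _ = ‖Mnu (-1/4) sc - 1/((Real.Gamma (3/4):ℝ):ℂ)‖
          + ‖κ‖*|u|/2 * ‖Mnu (1/4) sc - 1/((Real.Gamma (5/4):ℝ):ℂ)‖ := by
          rw [norm_neg, hnormk, Complex.norm_real, Real.norm_eq_abs]
      _ ≤ T1 * ‖sc‖ + ‖κ‖*|u|/2 * (T2 * ‖sc‖) := by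
          refine add_le_add tail1 (mul_le_mul_of_nonneg_left tail2 (by positivity))
      _ ≤ T1 * |u|^3 + ‖κ‖*1/2 * (T2 * |u|^3) := by
          refine add_le_add (mul_le_mul_of_nonneg_left hsc3 hT1) ?_
          refine mul_le_mul ?_ (mul_le_mul_of_nonneg_left hsc3 hT2)
            (mul_nonneg hT2 (norm_nonneg _)) (by positivity)
          gcongr
      _ = KF * |u|^3 := by rw [hKFd]; ring
  -- lower bound on ‖F‖
  have hnc₀ : ‖c₀‖ = 1/Real.Gamma (3/4) := by
    rw [hc₀, norm_neg, norm_div, norm_one, Complex.norm_real, Real.norm_eq_abs,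
      abs_of_pos hγ34]
  have hu3le : |u|^3 ≤ |u| := by
    calc |u|^3 ≤ |u|^1 := pow_le_pow_of_le_one hau hu1 (by norm_num)
    _ = |u| := pow_one _
  have hsmall : ‖c₁*((u:ℝ):ℂ) + (wtilde ε κ (t:ℂ) - c₀ - c₁*((u:ℝ):ℂ))‖ ≤ 1/Real.Gamma (3/4)/2 := by
    calc ‖c₁*((u:ℝ):ℂ) + (wtilde ε κ (t:ℂ) - c₀ - c₁*((u:ℝ):ℂ))‖
        ≤ ‖c₁*((u:ℝ):ℂ)‖ + ‖wtilde ε κ (t:ℂ) - c₀ - c₁*((u:ℝ):ℂ)‖ := norm_add_le _ _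
      _ ≤ ‖c₁‖*|u| + KF*|u|^3 := by
          refine add_le_add (le_of_eq ?_) hEF3
          rw [norm_mul, Complex.norm_real, Real.norm_eq_abs]
      _ ≤ ‖c₁‖*|u| + KF*|u| := by
          refine add_le_add le_rfl (mul_le_mul_of_nonneg_left hu3le hKF0)
      _ = (‖c₁‖ + KF)*|u| := by ring
      _ ≤ (‖c₁‖ + KF + 1) * ((1/Real.Gamma (3/4)) / (2*(‖c₁‖ + KF + 1))) := by
          refine mul_le_mul ?_ hu2 hau ?_
          · linarith
          · have : (0:ℝ) ≤ ‖c₁‖ := norm_nonneg _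
            linarith
      _ = 1/Real.Gamma (3/4)/2 := by
          have h0 : ‖c₁‖ + KF + 1 ≠ 0 := by
            have : (0:ℝ) ≤ ‖c₁‖ := norm_nonneg _
            positivity
          field_simp
  have hFlow : 1/(2*Real.Gamma (3/4)) ≤ ‖wtilde ε κ (t:ℂ)‖ := by
    have hdecomp : wtilde ε κ (t:ℂ) = c₀ + (c₁*((u:ℝ):ℂ) + (wtilde ε κ (t:ℂ) - c₀ - c₁*((u:ℝ):ℂ))) := by ring
    calc 1/(2*Real.Gamma (3/4))
        = 1/Real.Gamma (3/4) - 1/Real.Gamma (3/4)/2 := by field_simp; ring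
      _ ≤ ‖c₀‖ - ‖c₁*((u:ℝ):ℂ) + (wtilde ε κ (t:ℂ) - c₀ - c₁*((u:ℝ):ℂ))‖ := by
          rw [hnc₀]; linarith
      _ ≤ ‖c₀ + (c₁*((u:ℝ):ℂ) + (wtilde ε κ (t:ℂ) - c₀ - c₁*((u:ℝ):ℂ)))‖ := by
          have h := norm_add_le (c₀ + (c₁*((u:ℝ):ℂ) + (wtilde ε κ (t:ℂ) - c₀ - c₁*((u:ℝ):ℂ))))
            (-(c₁*((u:ℝ):ℂ) + (wtilde ε κ (t:ℂ) - c₀ - c₁*((u:ℝ):ℂ))))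
          have e : (c₀ + (c₁*((u:ℝ):ℂ) + (wtilde ε κ (t:ℂ) - c₀ - c₁*((u:ℝ):ℂ))))
              + (-(c₁*((u:ℝ):ℂ) + (wtilde ε κ (t:ℂ) - c₀ - c₁*((u:ℝ):ℂ)))) = c₀ := by ring
          rw [e, norm_neg] at h
          linarith
      _ = ‖wtilde ε κ (t:ℂ)‖ := by rw [← hdecomp]
  have hFne : wtilde ε κ (t:ℂ) ≠ 0 := by
    intro h
    rw [h, norm_zero] at hFlow
    have : 0 < 1/(2*Real.Gamma (3/4)) := by positivity
    linarith
  refine ⟨hFne, ?_⟩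
  -- G
  set G : ℂ := ((u:ℝ):ℂ)^3/4 * Mnu (3/4) sc + κ/2 * Mnu (1/4) sc
    - κ*((u:ℝ):ℂ)^4/8 * Mnu (5/4) sc with hGd
  have hderivG : deriv (wtilde ε κ) (t:ℂ) = S * G := by
    rw [deriv_wtilde ε κ (t:ℂ), hGd, ← hsc, ← hS, huc, ← hSsq]
    ring
  have hEGeq : G - c₁ = ((u:ℝ):ℂ)^3/4 * Mnu (3/4) sc
      + κ/2 * (Mnu (1/4) sc - 1/((Real.Gamma (5/4):ℝ):ℂ))
      - κ*((u:ℝ):ℂ)^4/8 * Mnu (5/4) sc := by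
    rw [hGd, hc₁]
    field_simp
    ring
  have hau4 : |u|^4 ≤ |u|^3 := pow_le_pow_of_le_one hau hu1 (by norm_num)
  have hEG3 : ‖G - c₁‖ ≤ KG * |u|^3 := by
    rw [hEGeq]
    have e1 : ‖((u:ℝ):ℂ)^3/4 * Mnu (3/4) sc‖ = |u|^3/4 * ‖Mnu (3/4) sc‖ := by
      rw [norm_mul, norm_div, norm_pow, Complex.norm_real, Real.norm_eq_abs]
      norm_num
    have e2 : ‖κ/2 * (Mnu (1/4) sc - 1/((Real.Gamma (5/4):ℝ):ℂ))‖
        = ‖κ‖/2 * ‖Mnu (1/4) sc - 1/((Real.Gamma (5/4):ℝ):ℂ)‖ := by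
      rw [norm_mul, norm_div]
      norm_num
    have e3 : ‖κ*((u:ℝ):ℂ)^4/8 * Mnu (5/4) sc‖ = ‖κ‖*|u|^4/8 * ‖Mnu (5/4) sc‖ := by
      rw [norm_mul, norm_div, norm_mul, norm_pow, Complex.norm_real, Real.norm_eq_abs]
      norm_num
    calc ‖((u:ℝ):ℂ)^3/4 * Mnu (3/4) sc
          + κ/2 * (Mnu (1/4) sc - 1/((Real.Gamma (5/4):ℝ):ℂ))
          - κ*((u:ℝ):ℂ)^4/8 * Mnu (5/4) sc‖
        ≤ ‖((u:ℝ):ℂ)^3/4 * Mnu (3/4) sc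
          + κ/2 * (Mnu (1/4) sc - 1/((Real.Gamma (5/4):ℝ):ℂ))‖
          + ‖κ*((u:ℝ):ℂ)^4/8 * Mnu (5/4) sc‖ := norm_sub_le _ _
      _ ≤ ‖((u:ℝ):ℂ)^3/4 * Mnu (3/4) sc‖
          + ‖κ/2 * (Mnu (1/4) sc - 1/((Real.Gamma (5/4):ℝ):ℂ))‖
          + ‖κ*((u:ℝ):ℂ)^4/8 * Mnu (5/4) sc‖ := by
          have := norm_add_le (((u:ℝ):ℂ)^3/4 * Mnu (3/4) sc)
            (κ/2 * (Mnu (1/4) sc - 1/((Real.Gamma (5/4):ℝ):ℂ)))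
          linarith
      _ ≤ |u|^3/4 * B3 + ‖κ‖/2 * (T2 * ‖sc‖) + ‖κ‖*|u|^4/8 * B5 := by
          rw [e1, e2, e3]
          refine add_le_add (add_le_add ?_ ?_) ?_
          · exact mul_le_mul_of_nonneg_left bound3 (by positivity)
          · exact mul_le_mul_of_nonneg_left tail2 (by positivity)
          · exact mul_le_mul_of_nonneg_left bound5 (by positivity)
      _ ≤ |u|^3/4 * B3 + ‖κ‖/2 * (T2 * |u|^3) + ‖κ‖*|u|^3/8 * B5 := by
          refine add_le_add (add_le_add le_rfl ?_) ?_
          · exact mul_le_mul_of_nonneg_left (mul_le_mul_of_nonneg_left hsc3 hT2) (by positivity)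
          · refine mul_le_mul_of_nonneg_right ?_ hB5
            gcongr
      _ = KG * |u|^3 := by rw [hKGd]; ring
  -- H identity and bound
  have hHid : G + A*(1+A*((u:ℝ):ℂ)+(A*((u:ℝ):ℂ))^2)*(wtilde ε κ (t:ℂ))
      = (G - c₁) + A^3*c₁*((u:ℝ):ℂ)^3
        + A*(1+A*((u:ℝ):ℂ)+(A*((u:ℝ):ℂ))^2)*(wtilde ε κ (t:ℂ) - c₀ - c₁*((u:ℝ):ℂ)) := by
    linear_combination (1 + A*((u:ℝ):ℂ) + A^2*((u:ℝ):ℂ)^2) * hAc₀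
  have hPbound : ‖(1:ℂ)+A*((u:ℝ):ℂ)+(A*((u:ℝ):ℂ))^2‖ ≤ 1+‖A‖+‖A‖^2 := by
    calc ‖(1:ℂ)+A*((u:ℝ):ℂ)+(A*((u:ℝ):ℂ))^2‖
        ≤ ‖(1:ℂ)+A*((u:ℝ):ℂ)‖ + ‖(A*((u:ℝ):ℂ))^2‖ := norm_add_le _ _
      _ ≤ ‖(1:ℂ)‖ + ‖A*((u:ℝ):ℂ)‖ + ‖(A*((u:ℝ):ℂ))^2‖ := by
          have := norm_add_le (1:ℂ) (A*((u:ℝ):ℂ))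
          linarith
      _ ≤ 1 + ‖A‖ + ‖A‖^2 := by
          rw [norm_one, norm_pow, norm_mul, Complex.norm_real, Real.norm_eq_abs]
          have h1 : ‖A‖*|u| ≤ ‖A‖*1 := mul_le_mul_of_nonneg_left hu1 (norm_nonneg _)
          have h2 : (‖A‖*|u|)^2 ≤ ‖A‖^2 := by
            rw [mul_pow]
            have h3 : |u|^2 ≤ 1 := pow_le_one₀ hau hu1
            calc ‖A‖^2 * |u|^2 ≤ ‖A‖^2 * 1 :=
                  mul_le_mul_of_nonneg_left h3 (sq_nonneg _)
              _ = ‖A‖^2 := mul_one _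
          linarith [norm_nonneg A, mul_le_mul_of_nonneg_left hu1 (norm_nonneg A)]
  have hH3 : ‖G + A*(1+A*((u:ℝ):ℂ)+(A*((u:ℝ):ℂ))^2)*(wtilde ε κ (t:ℂ))‖ ≤ CH * |u|^3 := by
    rw [hHid]
    have e4 : ‖A^3*c₁*((u:ℝ):ℂ)^3‖ = ‖A‖^3*‖c₁‖*|u|^3 := by
      rw [norm_mul, norm_mul, norm_pow, norm_pow, Complex.norm_real, Real.norm_eq_abs]
    calc ‖(G - c₁) + A^3*c₁*((u:ℝ):ℂ)^3
          + A*(1+A*((u:ℝ):ℂ)+(A*((u:ℝ):ℂ))^2)*(wtilde ε κ (t:ℂ) - c₀ - c₁*((u:ℝ):ℂ))‖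
        ≤ ‖(G - c₁) + A^3*c₁*((u:ℝ):ℂ)^3‖
          + ‖A*(1+A*((u:ℝ):ℂ)+(A*((u:ℝ):ℂ))^2)*(wtilde ε κ (t:ℂ) - c₀ - c₁*((u:ℝ):ℂ))‖ :=
          norm_add_le _ _
      _ ≤ ‖G - c₁‖ + ‖A^3*c₁*((u:ℝ):ℂ)^3‖
          + ‖A*(1+A*((u:ℝ):ℂ)+(A*((u:ℝ):ℂ))^2)*(wtilde ε κ (t:ℂ) - c₀ - c₁*((u:ℝ):ℂ))‖ := by
          have := norm_add_le (G - c₁) (A^3*c₁*((u:ℝ):ℂ)^3)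
          linarith
      _ ≤ KG*|u|^3 + ‖A‖^3*‖c₁‖*|u|^3 + ‖A‖*(1+‖A‖+‖A‖^2)*(KF*|u|^3) := by
          refine add_le_add (add_le_add hEG3 (le_of_eq e4)) ?_
          rw [norm_mul, norm_mul]
          refine mul_le_mul (mul_le_mul_of_nonneg_left hPbound (norm_nonneg _)) hEF3
            (norm_nonneg _) (by positivity)
      _ = CH * |u|^3 := by rw [hCHd]; ring
  -- final assembly
  have hkey : leps ε κ (t:ℂ) - Complex.I * A * S * (1 + A * S * (t:ℂ) + (A * S * (t:ℂ))^2)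
      = -Complex.I * S * (G + A*(1+A*((u:ℝ):ℂ)+(A*((u:ℝ):ℂ))^2)*(wtilde ε κ (t:ℂ)))
        / (wtilde ε κ (t:ℂ)) := by
    unfold leps
    rw [hderivG, huc]
    field_simp
    ring
  rw [hkey]
  have hnorm : ‖-Complex.I * S * (G + A*(1+A*((u:ℝ):ℂ)+(A*((u:ℝ):ℂ))^2)*(wtilde ε κ (t:ℂ)))
      / (wtilde ε κ (t:ℂ))‖
      = Real.sqrt ε * ‖G + A*(1+A*((u:ℝ):ℂ)+(A*((u:ℝ):ℂ))^2)*(wtilde ε κ (t:ℂ))‖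
        / ‖wtilde ε κ (t:ℂ)‖ := by
    rw [norm_div, norm_mul, norm_mul, norm_neg, Complex.norm_I, one_mul, hS,
      Complex.norm_real, Real.norm_eq_abs, abs_of_pos hsε]
  rw [hnorm, ← habsu]
  have hden : 0 < 1/(2*Real.Gamma (3/4)) := by positivity
  calc Real.sqrt ε * ‖G + A*(1+A*((u:ℝ):ℂ)+(A*((u:ℝ):ℂ))^2)*(wtilde ε κ (t:ℂ))‖
        / ‖wtilde ε κ (t:ℂ)‖
      ≤ Real.sqrt ε * (CH * |u|^3) / (1/(2*Real.Gamma (3/4))) := by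
        refine div_le_div₀ (by positivity) (mul_le_mul_of_nonneg_left hH3 hsε.le) hden hFlow
    _ = (2*Real.Gamma (3/4)*CH) * (Real.sqrt ε * |u|^3) := by
        field_simp
    _ ≤ C * (Real.sqrt ε * |u|^3) := by
        refine mul_le_mul_of_nonneg_right ?_ (mul_nonneg hsε.le (by positivity))
        rw [hCd]; linarith
    _ = C * Real.sqrt ε * |u|^3 := by ring

end
end

section
/- For every ε > 0, one has w̃_ε(−1/ε, κ_ε) ≠ 0 and l_ε(−1/ε, κ_ε) = 1; that is, the choice κ = κ_ε makes the solution l_ε(·,κ) of the Riccati equation l' + i·l² = i·ε²·t² satisfy the initial condition l(−1/ε) = 1. -/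
open Complex MeasureTheory Set

noncomputable section

namespace LepsAux

def mcoef (ν : ℝ) (k : ℕ) : ℂ :=
  (-1) ^ k / ((k.factorial : ℂ) * ((Real.Gamma (ν + k + 1) : ℝ) : ℂ))

lemma Mnu_eq_tsum (ν : ℝ) (s : ℂ) : Mnu ν s = ∑' k : ℕ, mcoef ν k * s ^ k := by
  unfold Mnu
  refine tsum_congr fun k => ?_
  rw [mcoef, show ((ν : ℂ) + (k : ℂ) + 1) = ((↑(ν + (k : ℝ) + 1) : ℝ) : ℂ) by push_cast; ring,
    Complex.Gamma_ofReal]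
  ring

lemma gamma_pos_aux {ν : ℝ} (hν : -(3/4 : ℝ) ≤ ν) (k : ℕ) : 0 < Real.Gamma (ν + k + 1) := by
  have : (0 : ℝ) ≤ k := Nat.cast_nonneg k
  exact Real.Gamma_pos_of_pos (by linarith)

lemma gamma_lb {ν : ℝ} (hν : -(3/4 : ℝ) ≤ ν) (k : ℕ) :
    Real.Gamma (ν + 1) * ((k.factorial : ℝ) / 4 ^ k) ≤ Real.Gamma (ν + k + 1) := by
  induction k with
  | zero => simp
  | succ n ih =>
    have hn : (0 : ℝ) ≤ n := Nat.cast_nonneg n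
    have h1 : (0 : ℝ) < ν + n + 1 := by linarith
    have hΓ : 0 < Real.Gamma (ν + n + 1) := gamma_pos_aux hν n
    have harg : ν + (n + 1 : ℕ) + 1 = (ν + n + 1) + 1 := by push_cast; ring
    rw [harg, Real.Gamma_add_one h1.ne']
    have hfac : ((n + 1 : ℕ).factorial : ℝ) = (n + 1) * n.factorial := by
      rw [Nat.factorial_succ]; push_cast; ring
    have key : Real.Gamma (ν + 1) * ((n.factorial : ℝ) / 4 ^ n) * ((n + 1) / 4)
        ≤ Real.Gamma (ν + n + 1) * (ν + n + 1) := by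
      have h2 : ((n : ℝ) + 1) / 4 ≤ ν + n + 1 := by linarith
      have h3 : (0 : ℝ) ≤ (n + 1) / 4 := by positivity
      calc Real.Gamma (ν + 1) * ((n.factorial : ℝ) / 4 ^ n) * ((n + 1) / 4)
          ≤ Real.Gamma (ν + n + 1) * ((n + 1) / 4) := mul_le_mul_of_nonneg_right ih h3
        _ ≤ Real.Gamma (ν + n + 1) * (ν + n + 1) := mul_le_mul_of_nonneg_left h2 hΓ.le
    calc Real.Gamma (ν + 1) * (((n + 1 : ℕ).factorial : ℝ) / 4 ^ (n + 1))
        = Real.Gamma (ν + 1) * ((n.factorial : ℝ) / 4 ^ n) * ((n + 1) / 4) := by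
          rw [hfac]; ring
      _ ≤ Real.Gamma (ν + n + 1) * (ν + n + 1) := key
      _ = (ν + n + 1) * Real.Gamma (ν + n + 1) := mul_comm _ _

lemma mcoef_norm {ν : ℝ} (hν : -(3/4 : ℝ) ≤ ν) (k : ℕ) :
    ‖mcoef ν k‖ ≤ (Real.Gamma (ν + 1))⁻¹ * 4 ^ k / (k.factorial : ℝ) / (k.factorial : ℝ) := by
  have hΓ := gamma_pos_aux hν k
  have hΓ1 : 0 < Real.Gamma (ν + 1) := Real.Gamma_pos_of_pos (by linarith)
  have hfac : (0 : ℝ) < (k.factorial : ℝ) := by positivity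
  have hnorm : ‖mcoef ν k‖ = ((k.factorial : ℝ) * Real.Gamma (ν + k + 1))⁻¹ := by
    rw [mcoef, norm_div, norm_pow, norm_neg, norm_one, one_pow, norm_mul,
      Complex.norm_natCast, Complex.norm_real, Real.norm_eq_abs, abs_of_pos hΓ, one_div]
  rw [hnorm]
  have step : ((k.factorial : ℝ) * (Real.Gamma (ν + 1) * ((k.factorial : ℝ) / 4 ^ k)))⁻¹
      = (Real.Gamma (ν + 1))⁻¹ * 4 ^ k / (k.factorial : ℝ) / (k.factorial : ℝ) := by
    field_simp
  rw [← step]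
  apply inv_anti₀
  · positivity
  · exact mul_le_mul_of_nonneg_left (gamma_lb hν k) hfac.le

lemma summable_deriv_aux {ν : ℝ} (hν : -(3/4 : ℝ) ≤ ν) {R : ℝ} (hR : 0 ≤ R) :
    Summable (fun k : ℕ => (k : ℝ) * ‖mcoef ν k‖ * R ^ k) := by
  have hΓ1 : 0 < Real.Gamma (ν + 1) := Real.Gamma_pos_of_pos (by linarith)
  refine Summable.of_nonneg_of_le (fun k => by positivity)
    (fun k => ?_) (((Real.summable_pow_div_factorial (4 * R)).mul_left (Real.Gamma (ν + 1))⁻¹))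
  have hfac : (0 : ℝ) < (k.factorial : ℝ) := by positivity
  have h2 : (k : ℝ) ≤ (k.factorial : ℝ) := by exact_mod_cast Nat.self_le_factorial k
  calc (k : ℝ) * ‖mcoef ν k‖ * R ^ k
      ≤ (k : ℝ) * ((Real.Gamma (ν + 1))⁻¹ * 4 ^ k / (k.factorial : ℝ) / (k.factorial : ℝ))
        * R ^ k := by
        apply mul_le_mul_of_nonneg_right (mul_le_mul_of_nonneg_left (mcoef_norm hν k)
          (Nat.cast_nonneg k)) (by positivity)
    _ = ((k : ℝ) / (k.factorial : ℝ)) * ((Real.Gamma (ν + 1))⁻¹ * ((4 * R) ^ k / (k.factorial : ℝ))) := by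
        rw [mul_pow]; ring
    _ ≤ 1 * ((Real.Gamma (ν + 1))⁻¹ * ((4 * R) ^ k / (k.factorial : ℝ))) := by
        apply mul_le_mul_of_nonneg_right ((div_le_one hfac).2 h2)
        have : (0:ℝ) ≤ (Real.Gamma (ν+1))⁻¹ := by positivity
        positivity
    _ = (Real.Gamma (ν + 1))⁻¹ * ((4 * R) ^ k / (k.factorial : ℝ)) := one_mul _

lemma summable_term (ν : ℝ) (hν : -(3/4 : ℝ) ≤ ν) (s : ℂ) :
    Summable (fun k : ℕ => mcoef ν k * s ^ k) := by
  have hΓ1 : 0 < Real.Gamma (ν + 1) := Real.Gamma_pos_of_pos (by linarith)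
  refine Summable.of_norm ?_
  refine Summable.of_nonneg_of_le (fun k => norm_nonneg _) (fun k => ?_)
    ((Real.summable_pow_div_factorial (4 * ‖s‖)).mul_left (Real.Gamma (ν + 1))⁻¹)
  have hfac : (0 : ℝ) < (k.factorial : ℝ) := by positivity
  have h1 : (1:ℝ) ≤ (k.factorial : ℝ) := by exact_mod_cast Nat.one_le_iff_ne_zero.2 k.factorial_ne_zero
  calc ‖mcoef ν k * s ^ k‖ = ‖mcoef ν k‖ * ‖s‖ ^ k := by rw [norm_mul, norm_pow]
    _ ≤ ((Real.Gamma (ν + 1))⁻¹ * 4 ^ k / (k.factorial : ℝ) / (k.factorial : ℝ)) * ‖s‖ ^ k :=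
        mul_le_mul_of_nonneg_right (mcoef_norm hν k) (by positivity)
    _ = (1 / (k.factorial : ℝ)) * ((Real.Gamma (ν + 1))⁻¹ * ((4 * ‖s‖) ^ k / (k.factorial : ℝ))) := by
        rw [mul_pow]; ring
    _ ≤ 1 * ((Real.Gamma (ν + 1))⁻¹ * ((4 * ‖s‖) ^ k / (k.factorial : ℝ))) := by
        apply mul_le_mul_of_nonneg_right ((div_le_one hfac).2 h1)
        have : (0:ℝ) ≤ (Real.Gamma (ν+1))⁻¹ := by positivity
        positivity
    _ = _ := one_mul _

lemma mcoef_succ {ν : ℝ} (hν : -(3/4 : ℝ) ≤ ν) (k : ℕ) : ((k : ℂ) + 1) * mcoef ν (k + 1) = -mcoef (ν + 1) k := by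
  have hΓpos : 0 < Real.Gamma (ν + 1 + k + 1) := gamma_pos_aux (by linarith) k
  rw [mcoef, mcoef, show (ν + ((k : ℕ) + 1 : ℕ) + 1 : ℝ) = ν + 1 + k + 1 by push_cast; ring]
  have hΓ : ((Real.Gamma (ν + 1 + k + 1) : ℝ) : ℂ) ≠ 0 := by
    exact_mod_cast (Complex.ofReal_ne_zero).2 hΓpos.ne'
  have hfac : ((k + 1).factorial : ℂ) = ((k : ℂ) + 1) * (k.factorial : ℂ) := by
    rw [Nat.factorial_succ]; push_cast; ring
  rw [hfac]
  have hk1 : ((k : ℂ) + 1) ≠ 0 := by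
    have : ((k : ℂ) + 1) = ((k + 1 : ℕ) : ℂ) := by push_cast; ring
    rw [this]; exact_mod_cast Nat.succ_ne_zero k
  have hfacne : (k.factorial : ℂ) ≠ 0 := by exact_mod_cast k.factorial_ne_zero
  field_simp
  rw [pow_succ]
  ring

lemma hasDerivAt_Mnu {ν : ℝ} (hν : -(3/4 : ℝ) ≤ ν) (s : ℂ) :
    HasDerivAt (Mnu ν) (-Mnu (ν + 1) s) s := by
  set R : ℝ := ‖s‖ + 1 with hR
  have hR1 : (1 : ℝ) ≤ R := by rw [hR]; linarith [norm_nonneg s]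
  have hR0 : (0 : ℝ) ≤ R := zero_le_one.trans hR1
  have hball : s ∈ Metric.ball (0 : ℂ) R := by
    simp [Metric.mem_ball, hR]
  have hbound : ∀ (k : ℕ), ∀ y ∈ Metric.ball (0 : ℂ) R,
      ‖mcoef ν k * ((k : ℂ) * y ^ (k - 1))‖ ≤ (k : ℝ) * ‖mcoef ν k‖ * R ^ k := by
    intro k y hy
    have hyR : ‖y‖ ≤ R := by
      rw [Metric.mem_ball, dist_zero_right] at hy; exact hy.le
    have h1 : ‖y‖ ^ (k - 1) ≤ R ^ k := by
      calc ‖y‖ ^ (k - 1) ≤ R ^ (k - 1) := pow_le_pow_left₀ (norm_nonneg y) hyR _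
        _ ≤ R ^ k := pow_le_pow_right₀ hR1 (Nat.sub_le k 1)
    calc ‖mcoef ν k * ((k : ℂ) * y ^ (k - 1))‖
        = (k : ℝ) * ‖mcoef ν k‖ * ‖y‖ ^ (k - 1) := by
          rw [norm_mul, norm_mul, norm_pow, Complex.norm_natCast]; ring
      _ ≤ (k : ℝ) * ‖mcoef ν k‖ * R ^ k := by
          apply mul_le_mul_of_nonneg_left h1 (by positivity)
  have hderiv : ∀ (k : ℕ), ∀ y ∈ Metric.ball (0 : ℂ) R,
      HasDerivAt (fun z : ℂ => mcoef ν k * z ^ k) (mcoef ν k * ((k : ℂ) * y ^ (k - 1))) y :=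
    fun k y _ => (hasDerivAt_pow k y).const_mul _
  have key : HasDerivAt (fun z : ℂ => ∑' k : ℕ, mcoef ν k * z ^ k)
      (∑' k : ℕ, mcoef ν k * ((k : ℂ) * s ^ (k - 1))) s :=
    hasDerivAt_tsum_of_isPreconnected (summable_deriv_aux hν hR0) Metric.isOpen_ball
      (convex_ball (0:ℂ) R).isPreconnected hderiv hbound hball (summable_term ν hν s) hball
  have hsum : Summable (fun k : ℕ => mcoef ν k * ((k : ℂ) * s ^ (k - 1))) := by
    refine Summable.of_norm (Summable.of_nonneg_of_le (fun k => norm_nonneg _)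
      (fun k => hbound k s hball) (summable_deriv_aux hν hR0))
  have hval : (∑' k : ℕ, mcoef ν k * ((k : ℂ) * s ^ (k - 1))) = -Mnu (ν + 1) s := by
    rw [Summable.tsum_eq_zero_add hsum]
    simp only [Nat.cast_zero, zero_mul, mul_zero, zero_add]
    rw [Mnu_eq_tsum, ← tsum_neg]
    refine tsum_congr fun k => ?_
    have h := mcoef_succ hν k
    have hpow : (k + 1 : ℕ) - 1 = k := rfl
    rw [hpow]
    push_cast
    linear_combination s ^ k * h
  rw [← hval]
  have hfun : Mnu ν = fun z : ℂ => ∑' k : ℕ, mcoef ν k * z ^ k := funext fun z => Mnu_eq_tsum ν z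
  rw [hfun]
  exact key

lemma mcoef_rec {ν : ℝ} (hν : (1/4 : ℝ) ≤ ν) (k : ℕ) :
    ν * mcoef ν (k + 1) - mcoef (ν - 1) (k + 1) = mcoef (ν + 1) k := by
  have hk : (0 : ℝ) ≤ k := Nat.cast_nonneg k
  have hpos : (0 : ℝ) < ν + k + 1 := by linarith
  have hA : 0 < Real.Gamma (ν + k + 1) := Real.Gamma_pos_of_pos hpos
  have harg1 : (ν + ((k : ℕ) + 1 : ℕ) + 1 : ℝ) = (ν + k + 1) + 1 := by push_cast; ring
  have harg2 : (ν - 1 + ((k : ℕ) + 1 : ℕ) + 1 : ℝ) = ν + k + 1 := by push_cast; ring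
  have harg3 : (ν + 1 + k + 1 : ℝ) = (ν + k + 1) + 1 := by ring
  rw [mcoef, mcoef, mcoef, harg1, harg2, harg3, Real.Gamma_add_one hpos.ne']
  have hAne : ((Real.Gamma (ν + k + 1) : ℝ) : ℂ) ≠ 0 := by
    exact_mod_cast (Complex.ofReal_ne_zero).2 hA.ne'
  have hfacne : (((k+1).factorial : ℕ) : ℂ) ≠ 0 := by exact_mod_cast (k+1).factorial_ne_zero
  have hfacne' : ((k.factorial : ℕ) : ℂ) ≠ 0 := by exact_mod_cast k.factorial_ne_zero
  have hvk : ((ν + k + 1 : ℝ) : ℂ) ≠ 0 := by exact_mod_cast (Complex.ofReal_ne_zero).2 hpos.ne'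
  have hfac : (((k + 1).factorial : ℕ) : ℂ) = ((k : ℂ) + 1) * (k.factorial : ℂ) := by
    rw [Nat.factorial_succ]; push_cast; ring
  have hk1 : ((k : ℂ) + 1) ≠ 0 := by
    have : ((k : ℂ) + 1) = ((k + 1 : ℕ) : ℂ) := by push_cast; ring
    rw [this]; exact_mod_cast Nat.succ_ne_zero k
  rw [hfac]
  have hVne : ((ν:ℂ) + (k:ℂ) + 1) ≠ 0 := by
    have : ((ν:ℂ) + (k:ℂ) + 1) = ((ν + (k:ℝ) + 1 : ℝ) : ℂ) := by push_cast; ring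
    rw [this]
    exact_mod_cast (Complex.ofReal_ne_zero).2 hpos.ne'
  push_cast
  rw [pow_succ]
  field_simp
  ring

lemma Mnu_rec {ν : ℝ} (hν : (1/4 : ℝ) ≤ ν) (s : ℂ) :
    Mnu (ν - 1) s + s * Mnu (ν + 1) s = ν * Mnu ν s := by
  have hν0 : (0:ℝ) < ν := by linarith
  have hb1 : -(3/4 : ℝ) ≤ ν - 1 := by linarith
  have hb2 : -(3/4 : ℝ) ≤ ν := by linarith
  have hb3 : -(3/4 : ℝ) ≤ ν + 1 := by linarith
  -- the difference series
  have hsum1 := summable_term (ν - 1) hb1 s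
  have hsum2 := summable_term ν hb2 s
  have hdiff : Summable (fun k : ℕ => (ν * mcoef ν k - mcoef (ν - 1) k) * s ^ k) := by
    have := (hsum2.mul_left (ν : ℂ)).sub hsum1
    refine this.congr fun k => by ring
  have key : (∑' k : ℕ, (ν * mcoef ν k - mcoef (ν - 1) k) * s ^ k) = s * Mnu (ν + 1) s := by
    rw [Summable.tsum_eq_zero_add hdiff]
    have hzero : (ν * mcoef ν 0 - mcoef (ν - 1) 0) * s ^ 0 = 0 := by
      have hΓν : 0 < Real.Gamma ν := Real.Gamma_pos_of_pos hν0
      have h1 : (ν + (0:ℕ) + 1 : ℝ) = ν + 1 := by push_cast; ring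
      have h2 : (ν - 1 + (0:ℕ) + 1 : ℝ) = ν := by push_cast; ring
      rw [mcoef, mcoef, h1, h2, Real.Gamma_add_one hν0.ne']
      have hΓne : ((Real.Gamma ν : ℝ) : ℂ) ≠ 0 := by
        exact_mod_cast (Complex.ofReal_ne_zero).2 hΓν.ne'
      have hνne : ((ν:ℝ) : ℂ) ≠ 0 := by exact_mod_cast (Complex.ofReal_ne_zero).2 hν0.ne'
      push_cast
      field_simp
      simp
    rw [hzero, zero_add]
    have hterm : ∀ k : ℕ, (ν * mcoef ν (k+1) - mcoef (ν - 1) (k+1)) * s ^ (k+1)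
        = s * (mcoef (ν + 1) k * s ^ k) := by
      intro k
      rw [mcoef_rec hν k]
      ring
    rw [tsum_congr hterm, tsum_mul_left, ← Mnu_eq_tsum]
  calc Mnu (ν - 1) s + s * Mnu (ν + 1) s
      = (∑' k : ℕ, mcoef (ν - 1) k * s ^ k)
        + (∑' k : ℕ, (ν * mcoef ν k - mcoef (ν - 1) k) * s ^ k) := by
        rw [Mnu_eq_tsum, key]
    _ = ∑' k : ℕ, (ν : ℂ) * (mcoef ν k * s ^ k) := by
        rw [← Summable.tsum_add hsum1 hdiff]
        refine tsum_congr fun k => by ring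
    _ = ν * Mnu ν s := by rw [tsum_mul_left, ← Mnu_eq_tsum]

lemma Mnu_zero (ν : ℝ) : Mnu ν 0 = ((Real.Gamma (ν + 1) : ℝ) : ℂ)⁻¹ := by
  rw [Mnu_eq_tsum]
  rw [tsum_eq_single 0 (fun k hk => by
    rw [zero_pow hk, mul_zero])]
  rw [mcoef]
  norm_num

lemma conj_Mnu (ν : ℝ) (x : ℝ) :
    (starRingEnd ℂ) (Mnu ν (x : ℂ)) = Mnu ν (x : ℂ) := by
  rw [Mnu_eq_tsum]
  have h1 : (starRingEnd ℂ) (∑' k : ℕ, mcoef ν k * (x:ℂ) ^ k)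
      = ∑' k : ℕ, (starRingEnd ℂ) (mcoef ν k * (x:ℂ) ^ k) := tsum_star
  rw [h1]
  refine tsum_congr fun k => ?_
  rw [mcoef]
  simp only [map_mul, map_div₀, map_pow, map_neg, map_one,
    Complex.conj_ofReal, Complex.conj_natCast]

lemma wronskian (z : ℂ) :
    z * Mnu (1/4) z * Mnu (3/4) z + Mnu (-1/4) z * Mnu (-3/4) z
      = (((Real.Gamma (3/4) : ℝ) : ℂ) * ((Real.Gamma (1/4) : ℝ) : ℂ))⁻¹ := by
  set G : ℂ → ℂ := fun w => w * Mnu (1/4) w * Mnu (3/4) w + Mnu (-1/4) w * Mnu (-3/4) w with hG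
  have hderiv : ∀ w : ℂ, HasDerivAt G 0 w := by
    intro w
    have h1 := hasDerivAt_Mnu (ν := 1/4) (by norm_num) w
    have h3 := hasDerivAt_Mnu (ν := 3/4) (by norm_num) w
    have hm1 := hasDerivAt_Mnu (ν := -1/4) (by norm_num) w
    have hm3 := hasDerivAt_Mnu (ν := -3/4) (by norm_num) w
    have hd : HasDerivAt G
        ((1 * Mnu (1/4) w + w * -Mnu (1/4 + 1) w) * Mnu (3/4) w
          + w * Mnu (1/4) w * -Mnu (3/4 + 1) w
          + (-Mnu (-1/4 + 1) w * Mnu (-3/4) w + Mnu (-1/4) w * -Mnu (-3/4 + 1) w)) w :=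
      (((hasDerivAt_id w).mul h1).mul h3).add (hm1.mul hm3)
    have rec1 := Mnu_rec (ν := 1/4) (by norm_num) w
    have rec2 := Mnu_rec (ν := 3/4) (by norm_num) w
    rw [show (1/4 - 1 : ℝ) = -3/4 by norm_num] at rec1
    rw [show (3/4 - 1 : ℝ) = -1/4 by norm_num] at rec2
    have hzero : (1 * Mnu (1/4) w + w * -Mnu (1/4 + 1) w) * Mnu (3/4) w
          + w * Mnu (1/4) w * -Mnu (3/4 + 1) w
          + (-Mnu (-1/4 + 1) w * Mnu (-3/4) w + Mnu (-1/4) w * -Mnu (-3/4 + 1) w) = 0 := by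
      rw [show (-1/4 + 1 : ℝ) = 3/4 by norm_num, show (-3/4 + 1 : ℝ) = 1/4 by norm_num]
      push_cast at rec1 rec2
      linear_combination (-Mnu (3/4) w) * rec1 + (-Mnu (1/4) w) * rec2
    rw [hzero] at hd
    exact hd
  have hconst : G z = G 0 :=
    is_const_of_deriv_eq_zero (fun w => (hderiv w).differentiableAt)
      (fun w => (hderiv w).deriv) z 0
  have hG0 : G 0 = (((Real.Gamma (3/4) : ℝ) : ℂ) * ((Real.Gamma (1/4) : ℝ) : ℂ))⁻¹ := by
    rw [hG]
    simp only [zero_mul, Mnu_zero]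
    rw [show (-1/4 + 1 : ℝ) = 3/4 by norm_num, show (-3/4 + 1 : ℝ) = 1/4 by norm_num]
    rw [mul_inv]
    ring
  calc z * Mnu (1/4) z * Mnu (3/4) z + Mnu (-1/4) z * Mnu (-3/4) z = G z := rfl
    _ = _ := by rw [hconst, hG0]

end LepsAux

/-- The choice `κ = κ_ε` makes the solution `l_ε(·,κ)` of the Riccati equation satisfy the
initial condition `l_ε(-1/ε, κ_ε) = 1`. -/
theorem leps_kappaEps_initial_condition (ε : ℝ) (hε : 0 < ε) :
    wtilde ε (kappaEps ε) (((-(1/ε)) : ℝ) : ℂ) ≠ 0 ∧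
    leps ε (kappaEps ε) (((-(1/ε)) : ℝ) : ℂ) = 1 := by
  have hεne : ε ≠ 0 := hε.ne'
  have hεC : (ε : ℂ) ≠ 0 := Complex.ofReal_ne_zero.2 hεne
  -- real power bookkeeping
  set x : ℝ := 1 / (4 * ε) with hxdef
  have hxpos : 0 < x := by positivity
  set q : ℝ := x ^ ((1/4 : ℝ)) with hqdef
  have hqpos : 0 < q := Real.rpow_pos_of_pos hxpos _
  have hq4 : q ^ 4 = x := by
    rw [hqdef, ← Real.rpow_natCast (x ^ ((1/4 : ℝ))) 4, ← Real.rpow_mul hxpos.le]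
    norm_num
  have hqm1 : x ^ ((-1/4 : ℝ)) = q⁻¹ := by
    rw [show (-1/4 : ℝ) = -(1/4) by norm_num, Real.rpow_neg hxpos.le, hqdef]
  have hq3 : x ^ ((3/4 : ℝ)) = q ^ 3 := by
    rw [show (3/4 : ℝ) = (1/4) * ((3 : ℕ) : ℝ) by norm_num, Real.rpow_mul hxpos.le,
      Real.rpow_natCast, hqdef]
  have hqm3 : x ^ ((-3/4 : ℝ)) = (q ^ 3)⁻¹ := by
    rw [show (-3/4 : ℝ) = -((1/4) * ((3 : ℕ) : ℝ)) by norm_num, Real.rpow_neg hxpos.le,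
      Real.rpow_mul hxpos.le, Real.rpow_natCast, hqdef]
  have hq2 : q ^ 2 = Real.sqrt x := by
    rw [hqdef, ← Real.rpow_natCast (x ^ ((1/4 : ℝ))) 2, ← Real.rpow_mul hxpos.le,
      Real.sqrt_eq_rpow]
    norm_num
  have hsqrt : Real.sqrt ε = 1 / (2 * q ^ 2) := by
    have h1 : q ^ 2 * Real.sqrt ε = 1/2 := by
      rw [hq2, ← Real.sqrt_mul hxpos.le]
      rw [show x * ε = 1/4 by rw [hxdef]; field_simp]
      rw [show (1/4 : ℝ) = (1/2) ^ 2 by norm_num, Real.sqrt_sq (by norm_num)]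
    have h2 : (0 : ℝ) < 2 * q ^ 2 := by positivity
    field_simp
    linarith
  -- complex quantities
  set Q : ℂ := ((q : ℝ) : ℂ) with hQdef
  have hQne : Q ≠ 0 := Complex.ofReal_ne_zero.2 hqpos.ne'
  set κ : ℂ := kappaEps ε with hκdef
  set t0 : ℂ := ((-(1/ε) : ℝ) : ℂ) with ht0def
  set S : ℂ := ((1/(16*ε^2) : ℝ) : ℂ) with hSdef
  have hSQ : S = Q ^ 8 := by
    rw [hSdef, hQdef, show (1/(16*ε^2) : ℝ) = (q^4)^2 by rw [hq4, hxdef]; field_simp; ring]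
    push_cast
    ring
  have hxC : ((x : ℝ) : ℂ) = 1/(4*(ε:ℂ)) := by rw [hxdef]; push_cast; ring
  have hQ4C : Q ^ 4 = 1/(4*(ε:ℂ)) := by
    rw [hQdef, ← hxC]; exact_mod_cast congrArg (fun r : ℝ => (r : ℂ)) hq4
  have ht0Q : t0 = -(4 * Q ^ 4) := by
    rw [ht0def, hQ4C]; push_cast; field_simp
  have hsqC : ((Real.sqrt ε : ℝ) : ℂ) = 1/(2*Q^2) := by
    rw [hsqrt, hQdef]; push_cast; ring
  have h4e : 4*(ε:ℂ)*Q^4 = 1 := by rw [hQ4C]; field_simp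
  have hεQ : (ε:ℂ) = 1/(4*Q^4) := by
    rw [eq_div_iff (by exact mul_ne_zero (by norm_num) (pow_ne_zero 4 hQne))]
    linear_combination h4e
  -- argument normalizations
  have harg : (ε:ℂ)^2 * t0^4 / 16 = S := by
    rw [ht0def, hSdef]; push_cast; field_simp
  have hxarg : ((1/(2*ε) : ℝ) : ℂ)^2/4 = S := by
    rw [hSdef]; push_cast; field_simp; ring
  have hbase : (1/(2*ε)/2 : ℝ) = x := by rw [hxdef]; field_simp; ring
  -- Mnu values at S
  set a : ℂ := Mnu (-1/4) S with hadef
  set b : ℂ := Mnu (1/4) S with hbdef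
  set c : ℂ := Mnu (3/4) S with hcdef
  set d : ℂ := Mnu (-3/4) S with hddef
  set e : ℂ := Mnu (5/4) S with hedef
  -- Jc values
  have hJ : ∀ ν : ℝ, Jc ν (1/(2*ε)) = ((x ^ ν : ℝ) : ℂ) * Mnu ν S := by
    intro ν
    rw [Jc, hbase, hxarg]
  have hJ1 : Jc (1/4) (1/(2*ε)) = Q * b := by
    rw [hJ (1/4), ← hqdef, hQdef, hbdef]
  have hJm1 : Jc (-1/4) (1/(2*ε)) = Q⁻¹ * a := by
    rw [hJ (-1/4), hqm1, Complex.ofReal_inv, hQdef, hadef]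
  have hJ3 : Jc (3/4) (1/(2*ε)) = Q^3 * c := by
    rw [hJ (3/4), hq3, Complex.ofReal_pow, hQdef, hcdef]
  have hJm3 : Jc (-3/4) (1/(2*ε)) = (Q^3)⁻¹ * d := by
    rw [hJ (-3/4), hqm3, Complex.ofReal_inv, Complex.ofReal_pow, hQdef, hddef]
  -- recurrence at S
  have rec1 : d + Q^8 * e = b/4 := by
    have h := LepsAux.Mnu_rec (ν := 1/4) (by norm_num) S
    rw [show (1/4 - 1 : ℝ) = -3/4 by norm_num, show (1/4 + 1 : ℝ) = 5/4 by norm_num] at h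
    rw [← hddef, ← hedef, ← hbdef, hSQ] at h
    push_cast at h
    linear_combination h
  -- wronskian at S
  set K : ℂ := (((Real.Gamma (3/4) : ℝ) : ℂ) * ((Real.Gamma (1/4) : ℝ) : ℂ))⁻¹ with hKdef
  have hKne : K ≠ 0 := by
    rw [hKdef]
    have h3 : (0:ℝ) < Real.Gamma (3/4) := Real.Gamma_pos_of_pos (by norm_num)
    have h1 : (0:ℝ) < Real.Gamma (1/4) := Real.Gamma_pos_of_pos (by norm_num)
    exact inv_ne_zero (mul_ne_zero (Complex.ofReal_ne_zero.2 h3.ne')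
      (Complex.ofReal_ne_zero.2 h1.ne'))
  have wron : Q^8 * b * c + a * d = K := by
    have h := LepsAux.wronskian S
    rw [← hadef, ← hbdef, ← hcdef, ← hddef, ← hKdef, hSQ] at h
    linear_combination h
  -- reality of b, d
  have hbreal : b = ((b.re : ℝ) : ℂ) := by
    rw [hbdef, hSdef]
    exact (Complex.conj_eq_iff_re.mp (LepsAux.conj_Mnu (1/4) (1/(16*ε^2)))).symm
  have hdreal : d = ((d.re : ℝ) : ℂ) := by
    rw [hddef, hSdef]
    exact (Complex.conj_eq_iff_re.mp (LepsAux.conj_Mnu (-3/4) (1/(16*ε^2)))).symm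
  -- denominator nonzero
  have hDne : Jc (1/4) (1/(2*ε)) - Complex.I * Jc (-3/4) (1/(2*ε)) ≠ 0 := by
    rw [hJ1, hJm3]
    intro h0
    rw [hbreal, hdreal, hQdef] at h0
    have key : ∀ u v : ℝ, ((u : ℝ) : ℂ) - ((v : ℝ) : ℂ) * Complex.I = 0 → u = 0 ∧ v = 0 := by
      intro u v h
      constructor
      · simpa using congrArg Complex.re h
      · simpa using congrArg Complex.im h
    have h0' : ((q * b.re : ℝ) : ℂ) - ((q^3)⁻¹ * d.re : ℝ) * Complex.I = 0 := by
      push_cast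
      linear_combination h0
    obtain ⟨hre, him⟩ := key _ _ h0'
    have hb0 : b.re = 0 := by
      rcases mul_eq_zero.mp hre with h | h
      · exact absurd h hqpos.ne'
      · exact h
    have hd0 : d.re = 0 := by
      rcases mul_eq_zero.mp him with h | h
      · exact absurd h (inv_ne_zero (pow_ne_zero 3 hqpos.ne'))
      · exact h
    have hb00 : b = 0 := by rw [hbreal, hb0]; simp
    have hd00 : d = 0 := by rw [hdreal, hd0]; simp
    rw [hb00, hd00] at wron
    simp at wron
    exact hKne wron.symm
  -- kappa identity
  have hkd : κ * (Q * b - Complex.I * ((Q^3)⁻¹ * d)) = -(Q⁻¹ * a + Complex.I * (Q^3 * c)) := by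
    rw [hκdef, kappaEps, ← hJ1, ← hJm3]
    rw [div_mul_cancel₀ _ hDne]
    rw [hJm1, hJ3]
  -- polynomial versions
  have hcancel3 : Q^3 * (Q^3)⁻¹ = 1 := mul_inv_cancel₀ (pow_ne_zero 3 hQne)
  have hcancel1 : Q * Q⁻¹ = 1 := mul_inv_cancel₀ hQne
  have E1 : κ * (Q^4 * b - Complex.I * d) = -(Q^2 * a + Complex.I * Q^6 * c) := by
    have step1 : κ * (Q^4 * b - Complex.I * d)
        = Q^3 * (κ * (Q * b - Complex.I * ((Q^3)⁻¹ * d))) := by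
      linear_combination (κ * Complex.I * d) * hcancel3
    rw [step1, hkd]
    linear_combination (-(Q^2 * a)) * hcancel1
  have hDpoly : Q^4 * b - Complex.I * d
      = Q^3 * (Q * b - Complex.I * ((Q^3)⁻¹ * d)) := by
    linear_combination (Complex.I * d) * hcancel3
  have hDpolyne : Q^4 * b - Complex.I * d ≠ 0 := by
    rw [hDpoly]
    refine mul_ne_zero (pow_ne_zero 3 hQne) ?_
    rw [← hJ1, ← hJm3]
    exact hDne
  -- value of wtilde at t0
  have hwval : wtilde ε κ t0 = -a - κ * Q^2 * b := by
    rw [show wtilde ε κ t0 = -Mnu (-1/4) ((ε:ℂ)^2 * t0^4/16)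
        + κ * (Real.sqrt ε : ℂ) * t0 / 2 * Mnu (1/4) ((ε:ℂ)^2 * t0^4/16) from rfl]
    rw [harg, ← hadef, ← hbdef, hsqC, ht0Q]
    field_simp
    ring
  -- product identity for nonvanishing
  have hprod : (-a - κ * Q^2 * b) * (Q^4 * b - Complex.I * d) = Complex.I * K := by
    linear_combination (-(Q^2 * b)) * E1 + Complex.I * wron
  have hIK : Complex.I * K ≠ 0 := mul_ne_zero Complex.I_ne_zero hKne
  have hWne : wtilde ε κ t0 ≠ 0 := by
    rw [hwval]
    intro h0
    exact hIK (by rw [← hprod, h0, zero_mul])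
  refine ⟨hWne, ?_⟩
  -- derivative of wtilde at t0
  have hgder : HasDerivAt (fun t : ℂ => (ε:ℂ)^2 * t^4/16) ((ε:ℂ)^2 * (4 * t0^3)/16) t0 := by
    have h := ((hasDerivAt_pow 4 t0).const_mul ((ε:ℂ)^2)).div_const 16
    norm_num at h
    convert h using 1
  have hmc : HasDerivAt (fun t : ℂ => Mnu (-1/4) ((ε:ℂ)^2 * t^4/16))
      (-c * ((ε:ℂ)^2 * (4 * t0^3)/16)) t0 := by
    have h := (LepsAux.hasDerivAt_Mnu (ν := -1/4) (by norm_num)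
      ((ε:ℂ)^2 * t0^4/16)).comp t0 hgder
    rw [harg, show (-1/4 + 1 : ℝ) = 3/4 by norm_num, ← hcdef] at h
    simpa [Function.comp_def] using h
  have h1c : HasDerivAt (fun t : ℂ => Mnu (1/4) ((ε:ℂ)^2 * t^4/16))
      (-e * ((ε:ℂ)^2 * (4 * t0^3)/16)) t0 := by
    have h := (LepsAux.hasDerivAt_Mnu (ν := 1/4) (by norm_num)
      ((ε:ℂ)^2 * t0^4/16)).comp t0 hgder
    rw [harg, show (1/4 + 1 : ℝ) = 5/4 by norm_num, ← hedef] at h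
    simpa [Function.comp_def] using h
  have hu : HasDerivAt (fun t : ℂ => κ * (Real.sqrt ε : ℂ) * t / 2)
      (κ * (Real.sqrt ε : ℂ) / 2) t0 := by
    have h := ((hasDerivAt_id t0).const_mul (κ * (Real.sqrt ε : ℂ))).div_const 2
    simpa using h
  have hW : HasDerivAt (wtilde ε κ)
      (-(-c * ((ε:ℂ)^2 * (4 * t0^3)/16))
        + (κ * (Real.sqrt ε : ℂ) / 2 * Mnu (1/4) ((ε:ℂ)^2 * t0^4/16)
          + κ * (Real.sqrt ε : ℂ) * t0 / 2 * (-e * ((ε:ℂ)^2 * (4 * t0^3)/16)))) t0 := by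
    have h := (hmc.neg).add (hu.mul h1c)
    exact h
  have hW' : deriv (wtilde ε κ) t0
      = -(-c * ((ε:ℂ)^2 * (4 * t0^3)/16))
        + (κ * (Real.sqrt ε : ℂ) / 2 * b
          + κ * (Real.sqrt ε : ℂ) * t0 / 2 * (-e * ((ε:ℂ)^2 * (4 * t0^3)/16))) := by
    rw [hW.deriv, harg, ← hbdef]
  -- simplify the derivative (polynomial certificates)
  have P1 : 2 * Q^2 * ((Real.sqrt ε : ℝ) : ℂ) = 1 := by
    rw [hsqC]; field_simp
  have R3sq : 16 * (ε:ℂ)^2 * Q^8 = 1 := by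
    linear_combination (4 * (ε:ℂ) * Q^4 + 1) * h4e
  have R5 : 32 * Q^10 * (ε:ℂ)^2 * ((Real.sqrt ε : ℝ) : ℂ) = 1 := by
    linear_combination (16 * (ε:ℂ)^2 * Q^8) * P1 + R3sq
  have hW'poly : 4 * Q^2 * deriv (wtilde ε κ) t0 = -(4 * Q^6 * c) + κ * b - 4 * κ * Q^8 * e := by
    rw [hW', ht0Q]
    linear_combination (-4 * c * Q^6) * R3sq + (κ * b) * P1 + (-4 * κ * e * Q^8) * R5
  have hW'poly2 : 4 * Q^2 * deriv (wtilde ε κ) t0 = -(4 * Q^6 * c) + 4 * κ * d := by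
    rw [hW'poly]
    linear_combination (-4 * κ) * rec1
  -- the Riccati initial condition
  have hkey : deriv (wtilde ε κ) t0 = Complex.I * wtilde ε κ t0 := by
    have h4Q : (4 * Q^2 : ℂ) ≠ 0 := by
      exact mul_ne_zero (by norm_num) (pow_ne_zero 2 hQne)
    apply mul_right_cancel₀ hDpolyne
    apply mul_left_cancel₀ h4Q
    calc 4 * Q^2 * (deriv (wtilde ε κ) t0 * (Q^4 * b - Complex.I * d))
        = (4 * Q^2 * deriv (wtilde ε κ) t0) * (Q^4 * b - Complex.I * d) := by ring
      _ = (-(4 * Q^6 * c) + 4 * κ * d) * (Q^4 * b - Complex.I * d) := by rw [hW'poly2]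
      _ = -(4 * Q^2) * K := by linear_combination (4 * d) * E1 + (-(4 * Q^2)) * wron
      _ = 4 * Q^2 * (Complex.I * ((-a - κ * Q^2 * b) * (Q^4 * b - Complex.I * d))) := by
          rw [hprod]
          linear_combination (-(4 * Q^2 * K)) * Complex.I_mul_I
      _ = 4 * Q^2 * (Complex.I * wtilde ε κ t0 * (Q^4 * b - Complex.I * d)) := by
          rw [hwval]; ring
  show leps ε κ t0 = 1
  rw [leps, hkey]
  rw [show -Complex.I * (Complex.I * wtilde ε κ t0) = wtilde ε κ t0 by
    linear_combination (-(wtilde ε κ t0)) * Complex.I_mul_I]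
  exact div_self hWne

end
end

section
/- Let B ∈ ℝ with B ≠ 0. Then for every ε > 0 and every ρ ∈ ℝ: B² + ε + B²·cos(2ρ) − √(2ε)·B·sin(2ρ) ≥ ε²/(2B² + 2ε). In particular, the quantity A(ε) = B² + ε + B²·cos(2ρ) − √(2ε)·B·sin(2ρ) appearing in the denominator of l_ε(1/ε) in the case L > 0 is bounded below by a positive constant times ε². -/
/-- The elementary lower bound for the denominator appearing in `l_ε(1/ε)` in the case
`L > 0`: for `B ≠ 0`, `ε > 0`, and `ρ ∈ ℝ`,
`B² + ε + B² cos(2ρ) - √(2ε) B sin(2ρ) ≥ ε²/(2B² + 2ε)`. -/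
theorem denominator_lower_bound (B : ℝ) (hB : B ≠ 0) :
    ∀ ε : ℝ, 0 < ε → ∀ ρ : ℝ,
      B ^ 2 + ε + B ^ 2 * Real.cos (2 * ρ) - Real.sqrt (2 * ε) * B * Real.sin (2 * ρ)
        ≥ ε ^ 2 / (2 * B ^ 2 + 2 * ε) := by
  intro ε hε ρ
  have hB2 : 0 < B ^ 2 := by positivity
  set s := Real.sqrt (2 * ε) with hs
  have hs2 : s ^ 2 = 2 * ε := Real.sq_sqrt (by linarith)
  set c := Real.cos (2 * ρ)
  set S := Real.sin (2 * ρ)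
  have hpy : S ^ 2 + c ^ 2 = 1 := Real.sin_sq_add_cos_sq (2 * ρ)
  have hD : 0 < 2 * B ^ 2 + 2 * ε := by linarith
  rw [ge_iff_le, div_le_iff₀ hD]
  have h1 : (B^2*c - s*B*S)^2 ≤ (B^2 + ε)^2 - ε^2 := by
    have h2 : s^2*(B^2*S^2) = 2*ε*(B^2*S^2) := by rw [hs2]
    have h3 : s^2*(B^2*c^2) = 2*ε*(B^2*c^2) := by rw [hs2]
    nlinarith [sq_nonneg (B^2*S + s*B*c), h2, h3]
  nlinarith [sq_nonneg (B^2 + ε + (B^2*c - s*B*S))]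
end
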